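/- arXiv:2306.03936 — 4 statements merged into one kernel-verified Lean document; each statement's English description precedes it below -/
import Mathlib

section
/- Let d ≤ 2 and let V : ℝ^d → ℝ satisfy the doubling condition ∫_{B(x,2r)} V ≤ C_D (∫_{B(x,r)} V + r^{d-2}) for all x ∈ ℝ^d, r > 0. Define Ṽ : ℝ^{d+1} → ℝ by Ṽ(x,t) = V(x). Then for all (x,t) ∈ ℝ^{d+1} and all r > 0, ∫_{B((x,t),2r)} Ṽ(z) dz ≤ 4 C_D (∫_{B((x,t),r)} Ṽ(z) dz + r^{d-1}). -/
open MeasureTheory Metric Set Filter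
open scoped ENNReal



private lemma ballIntOn' {d : ℕ} {V : EuclideanSpace ℝ (Fin d) → ℝ}
    (hVloc : LocallyIntegrable V volume) (x : EuclideanSpace ℝ (Fin d)) (ρ : ℝ) :
    IntegrableOn V (ball x ρ) volume :=
  (hVloc.integrableOn_isCompact (isCompact_closedBall x ρ)).mono_set ball_subset_closedBall

private lemma Gmono {d : ℕ} {V : EuclideanSpace ℝ (Fin d) → ℝ}
    (hVpos : ∀ y, 0 ≤ V y) (hVloc : LocallyIntegrable V volume)
    (x : EuclideanSpace ℝ (Fin d)) :
    Monotone (fun ρ => ∫ y in ball x ρ, V y) := by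
  intro ρ₁ ρ₂ h
  apply setIntegral_mono_set (ballIntOn' hVloc x ρ₂)
  · exact Eventually.of_forall fun y => hVpos y
  · exact HasSubset.Subset.eventuallyLE (ball_subset_ball h)

private lemma Gnonneg {d : ℕ} {V : EuclideanSpace ℝ (Fin d) → ℝ}
    (hVpos : ∀ y, 0 ≤ V y) (x : EuclideanSpace ℝ (Fin d)) (ρ : ℝ) :
    0 ≤ ∫ y in ball x ρ, V y :=
  setIntegral_nonneg measurableSet_ball fun y _ => hVpos y

private lemma GcompInt {d : ℕ} {V : EuclideanSpace ℝ (Fin d) → ℝ}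
    (hVpos : ∀ y, 0 ≤ V y) (hVloc : LocallyIntegrable V volume)
    (x : EuclideanSpace ℝ (Fin d)) {h : ℝ → ℝ} (hh : Measurable h)
    {B : ℝ} (hB : ∀ s, h s ≤ B) (a b : ℝ) :
    IntegrableOn (fun s => ∫ y in ball x (h s), V y) (Ioo a b) volume := by
  have hGm : Measurable (fun ρ => ∫ y in ball x ρ, V y) :=
    (Gmono hVpos hVloc x).measurable
  apply Integrable.mono' (g := fun _ => ∫ y in ball x B, V y)
    (integrableOn_const measure_Ioo_lt_top.ne)
  · exact (hGm.comp hh).aestronglyMeasurable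
  · refine Eventually.of_forall fun s => ?_
    rw [Real.norm_eq_abs, abs_of_nonneg (Gnonneg hVpos x (h s))]
    exact Gmono hVpos hVloc x (hB s)


private lemma ballIntOn {d : ℕ} {V : EuclideanSpace ℝ (Fin d) → ℝ}
    (hVloc : LocallyIntegrable V volume) (x : EuclideanSpace ℝ (Fin d)) (ρ : ℝ) :
    IntegrableOn V (ball x ρ) volume :=
  (hVloc.integrableOn_isCompact (isCompact_closedBall x ρ)).mono_set ball_subset_closedBall

private lemma sliceEq {d : ℕ} (V : EuclideanSpace ℝ (Fin d) → ℝ)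
    (hVloc : LocallyIntegrable V volume)
    (z : EuclideanSpace ℝ (Fin (d+1))) (x : EuclideanSpace ℝ (Fin d))
    (hxz : x = WithLp.toLp 2 (fun i => z i.castSucc)) (R : ℝ) (hR : 0 < R) :
    ∫ w in ball z R, V (WithLp.toLp 2 (fun i => w i.castSucc)) =
      ∫ u in Ioo (-R) R, (∫ y in ball x (Real.sqrt (R^2 - u^2)), V y) := by
  set t : ℝ := z (Fin.last d) with ht
  let Ψ : EuclideanSpace ℝ (Fin (d+1)) ≃ᵐ ℝ × EuclideanSpace ℝ (Fin d) :=
    ((MeasurableEquiv.toLp 2 (Fin (d+1) → ℝ)).symm).trans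
      ((MeasurableEquiv.piFinSuccAbove (fun _ : Fin (d+1) => ℝ) (Fin.last d)).trans
        ((MeasurableEquiv.refl ℝ).prodCongr ((MeasurableEquiv.toLp 2 (Fin d → ℝ)).symm).symm))
  have happ : ∀ w : EuclideanSpace ℝ (Fin (d+1)),
      Ψ w = (w (Fin.last d), (WithLp.toLp 2 (fun i => w i.castSucc) : EuclideanSpace ℝ (Fin d))) := by
    intro w
    refine Prod.ext rfl (congrArg (WithLp.toLp 2) ?_)
    funext i
    show w ((Fin.last d).succAbove i) = w i.castSucc
    rw [Fin.succAbove_last]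
  have hΨmp : MeasurePreserving Ψ volume volume := by
    have h1 := EuclideanSpace.volume_preserving_symm_measurableEquiv_toLp (Fin (d+1))
    have h2 := volume_preserving_piFinSuccAbove (fun _ : Fin (d+1) => ℝ) (Fin.last d)
    have h3 : MeasurePreserving
        (Prod.map (id : ℝ → ℝ) ⇑((MeasurableEquiv.toLp 2 (Fin d → ℝ)).symm).symm)
        ((volume : Measure ℝ).prod (volume : Measure (Fin d → ℝ)))
        ((volume : Measure ℝ).prod (volume : Measure (EuclideanSpace ℝ (Fin d)))) :=
      (MeasurePreserving.id volume).prod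
        ((EuclideanSpace.volume_preserving_symm_measurableEquiv_toLp (Fin d)).symm)
    have hco : ⇑Ψ = (Prod.map (id : ℝ → ℝ) ⇑((MeasurableEquiv.toLp 2 (Fin d → ℝ)).symm).symm) ∘
        (⇑(MeasurableEquiv.piFinSuccAbove (fun _ : Fin (d+1) => ℝ) (Fin.last d)) ∘
          ⇑((MeasurableEquiv.toLp 2 (Fin (d+1) → ℝ)).symm)) := rfl
    rw [hco]
    exact h3.comp (h2.comp h1)
  have hΨemb : MeasurableEmbedding Ψ := Ψ.measurableEmbedding
  have key := hΨmp.setIntegral_image_emb hΨemb (fun p => V p.2) (ball z R)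
  have hmem : ∀ w : EuclideanSpace ℝ (Fin (d+1)),
      dist w z < R ↔ ((Ψ w).1 - t)^2 + (dist (Ψ w).2 x)^2 < R^2 := by
    intro w
    have hfst : (Ψ w).1 = w (Fin.last d) := congrArg Prod.fst (happ w)
    have hsnd : ∀ i, (Ψ w).2 i = w i.castSucc :=
      fun i => congrArg (fun p => p.2 i) (happ w)
    have e1 : (dist w z)^2 = ∑ i : Fin (d+1), (w i - z i)^2 := by
      rw [EuclideanSpace.dist_eq, Real.sq_sqrt (by positivity)]
      congr 1; funext i; rw [Real.dist_eq, sq_abs]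
    have e2 : (dist (Ψ w).2 x)^2 = ∑ i : Fin d, (w i.castSucc - z i.castSucc)^2 := by
      rw [EuclideanSpace.dist_eq, Real.sq_sqrt (by positivity)]
      congr 1; funext i; rw [Real.dist_eq, sq_abs, hsnd i, hxz]
    have hdist2 : (dist w z)^2 = ((Ψ w).1 - t)^2 + (dist (Ψ w).2 x)^2 := by
      rw [e1, e2, Fin.sum_univ_castSucc, ht, hfst]; ring
    constructor
    · intro h
      have h0 : (0:ℝ) ≤ dist w z := dist_nonneg
      nlinarith [hdist2]
    · intro h
      have h0 : (0:ℝ) ≤ dist w z := dist_nonneg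
      nlinarith [hdist2]
  set S : Set (ℝ × EuclideanSpace ℝ (Fin d)) :=
    {p | (p.1 - t)^2 + (dist p.2 x)^2 < R^2} with hS
  have himg : Ψ '' ball z R = S := by
    ext p
    constructor
    · rintro ⟨w, hw, rfl⟩
      rw [mem_ball] at hw
      exact (hmem w).1 hw
    · intro hp
      refine ⟨Ψ.symm p, ?_, Ψ.apply_symm_apply p⟩
      rw [mem_ball, hmem (Ψ.symm p), Ψ.apply_symm_apply]
      exact hp
  have hSopen : IsOpen S := by
    apply isOpen_lt _ continuous_const
    exact ((continuous_fst.sub continuous_const).pow 2).add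
      ((continuous_snd.dist continuous_const).pow 2)
  have hSmeas : MeasurableSet S := hSopen.measurableSet
  have hSsub : S ⊆ (Ioo (t-R) (t+R)) ×ˢ (ball x R) := by
    rintro ⟨u, y⟩ hp
    simp only [hS, mem_setOf_eq] at hp
    have hd0 : (0:ℝ) ≤ dist y x := dist_nonneg
    refine ⟨⟨by nlinarith, by nlinarith⟩, ?_⟩
    rw [mem_ball]
    nlinarith
  have hvol : (volume : Measure (ℝ × EuclideanSpace ℝ (Fin d)))
      = (volume : Measure ℝ).prod volume := rfl
  have hInt : IntegrableOn (fun p : ℝ × EuclideanSpace ℝ (Fin d) => V p.2) S volume := by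
    refine IntegrableOn.mono_set ?_ hSsub
    have h1 : Integrable (fun _ : ℝ => (1:ℝ)) (volume.restrict (Ioo (t-R) (t+R))) :=
      integrableOn_const measure_Ioo_lt_top.ne
    have h2 : Integrable V (volume.restrict (ball x R)) := ballIntOn hVloc x R
    have h3 := h1.mul_prod h2
    rw [IntegrableOn, hvol, ← Measure.prod_restrict]
    simpa using h3
  have hG0 : ∀ u : ℝ, (fun y => S.indicator (fun p => V p.2) (u, y)) =
      if (u - t)^2 < R^2 then (ball x (Real.sqrt (R^2 - (u-t)^2))).indicator V else (fun _ => 0) := by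
    intro u
    by_cases hu : (u - t)^2 < R^2
    · rw [if_pos hu]
      funext y
      have hiff : (u, y) ∈ S ↔ y ∈ ball x (Real.sqrt (R^2 - (u-t)^2)) := by
        simp only [hS, mem_setOf_eq, mem_ball]
        rw [show dist y x < Real.sqrt (R^2 - (u-t)^2) ↔ (dist y x)^2 < R^2 - (u-t)^2 from
          (Real.lt_sqrt dist_nonneg)]
        constructor <;> intro h <;> nlinarith
      classical
      rw [Set.indicator_apply, Set.indicator_apply]
      exact if_congr hiff rfl rfl
    · rw [if_neg hu]
      funext y
      have hns : (u, y) ∉ S := by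
        simp only [hS, mem_setOf_eq, not_lt]
        have : (0:ℝ) ≤ (dist y x)^2 := by positivity
        nlinarith [not_lt.mp hu]
      simp [Set.indicator_apply, hns]
  calc ∫ w in ball z R, V (WithLp.toLp 2 (fun i => w i.castSucc))
      = ∫ w in ball z R, (fun p : ℝ × EuclideanSpace ℝ (Fin d) => V p.2) (Ψ w) := by
        apply setIntegral_congr_fun measurableSet_ball
        intro w _
        show V (WithLp.toLp 2 (fun i => w i.castSucc)) = V (Ψ w).2
        rw [happ w]
    _ = ∫ p in S, V p.2 := by rw [← key, himg]
    _ = ∫ p, S.indicator (fun p : ℝ × EuclideanSpace ℝ (Fin d) => V p.2) p := by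
        rw [integral_indicator hSmeas]
    _ = ∫ u : ℝ, ∫ y : EuclideanSpace ℝ (Fin d),
          S.indicator (fun p => V p.2) (u, y) := by
        rw [hvol]
        apply integral_prod
        rw [← hvol, integrable_indicator_iff hSmeas]
        exact hInt
    _ = ∫ u : ℝ, (Ioo (-R) R).indicator
          (fun v => ∫ y in ball x (Real.sqrt (R^2 - v^2)), V y) (u - t) := by
        congr 1
        funext u
        rw [hG0 u]
        by_cases hu : (u - t)^2 < R^2
        · rw [if_pos hu, integral_indicator measurableSet_ball]
          have hmem' : u - t ∈ Ioo (-R) R := ⟨by nlinarith, by nlinarith⟩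
          rw [Set.indicator_of_mem hmem']
        · rw [if_neg hu]
          have hmem' : u - t ∉ Ioo (-R) R := by
            rintro ⟨h1, h2⟩
            exact hu (by nlinarith)
          rw [Set.indicator_of_notMem hmem']
          simp
    _ = ∫ v : ℝ, (Ioo (-R) R).indicator
          (fun v => ∫ y in ball x (Real.sqrt (R^2 - v^2)), V y) v :=
        integral_sub_right_eq_self _ t
    _ = ∫ u in Ioo (-R) R, (∫ y in ball x (Real.sqrt (R^2 - u^2)), V y) := by
        rw [integral_indicator measurableSet_Ioo]


private lemma imgR (r c : ℝ) (hr : 0 < r) (hcpos : 0 < c) (hr2 : r^2 = 5*c^2)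
    (h2cr : 2*c < r) :
    (fun u : ℝ => Real.sqrt (u^2 + 3*r^2)) '' Ioo c r = Ioo (4*c) (2*r) := by
  ext y
  simp only [mem_image, mem_Ioo]
  constructor
  · rintro ⟨u, ⟨h1, h2⟩, rfl⟩
    constructor
    · exact (Real.lt_sqrt (by linarith)).2 (by nlinarith)
    · exact (Real.sqrt_lt' (by linarith)).2 (by nlinarith)
  · rintro ⟨h1, h2⟩
    have hy : 0 < y := lt_trans (by linarith) h1
    have hq1 : (0:ℝ) < (y - 4*c) * (y + 4*c) :=
      mul_pos (show (0:ℝ) < y - 4*c by linarith) (show (0:ℝ) < y + 4*c by linarith)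
    have hq2 : (0:ℝ) < (2*r - y) * (2*r + y) :=
      mul_pos (show (0:ℝ) < 2*r - y by linarith) (show (0:ℝ) < 2*r + y by linarith)
    refine ⟨Real.sqrt (y^2 - 3*r^2), ⟨?_, ?_⟩, ?_⟩
    · exact (Real.lt_sqrt hcpos.le).2 (by nlinarith [hq1, sq_nonneg c])
    · exact (Real.sqrt_lt' hr).2 (by nlinarith [hq2])
    · rw [Real.sq_sqrt (show (0:ℝ) ≤ y^2 - 3*r^2 by nlinarith [hq1, sq_nonneg c]),
        show y^2 - 3*r^2 + 3*r^2 = y^2 by ring, Real.sqrt_sq hy.le]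

private lemma imgL (r c : ℝ) (hr : 0 < r) (hcpos : 0 < c) (hr2 : r^2 = 5*c^2)
    (h2cr : 2*c < r) :
    (fun u : ℝ => -Real.sqrt (u^2 + 3*r^2)) '' Ioo (-r) (-c) = Ioo (-(2*r)) (-(4*c)) := by
  ext y
  simp only [mem_image, mem_Ioo]
  constructor
  · rintro ⟨u, ⟨h1, h2⟩, rfl⟩
    have hu2 : c^2 < u^2 := by nlinarith
    have hu2' : u^2 < r^2 := by nlinarith
    have b1 : 4*c < Real.sqrt (u^2 + 3*r^2) := (Real.lt_sqrt (by linarith)).2 (by nlinarith)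
    have b2 : Real.sqrt (u^2 + 3*r^2) < 2*r := (Real.sqrt_lt' (by linarith)).2 (by nlinarith)
    constructor <;> linarith
  · rintro ⟨h1, h2⟩
    have hy : y < 0 := by nlinarith
    have hq1 : (0:ℝ) < (-y - 4*c) * (-y + 4*c) :=
      mul_pos (show (0:ℝ) < -y - 4*c by linarith) (show (0:ℝ) < -y + 4*c by linarith)
    have hq2 : (0:ℝ) < (2*r + y) * (2*r - y) :=
      mul_pos (show (0:ℝ) < 2*r + y by linarith) (show (0:ℝ) < 2*r - y by linarith)
    have hy2a : 16*c^2 < y^2 := by nlinarith [hq1]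
    have hy2b : y^2 < 4*r^2 := by nlinarith [hq2]
    refine ⟨-Real.sqrt (y^2 - 3*r^2), ⟨?_, ?_⟩, ?_⟩
    · rw [neg_lt_neg_iff]
      exact (Real.sqrt_lt' hr).2 (by nlinarith [hq2])
    · rw [neg_lt_neg_iff]
      exact (Real.lt_sqrt hcpos.le).2 (by nlinarith [hq1, sq_nonneg c])
    · rw [neg_sq, Real.sq_sqrt (show (0:ℝ) ≤ y^2 - 3*r^2 by nlinarith),
        show y^2 - 3*r^2 + 3*r^2 = y^2 by ring, Real.sqrt_sq_eq_abs,
        abs_of_neg hy, neg_neg]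

set_option maxHeartbeats 1000000 in
private lemma d1main {V : EuclideanSpace ℝ (Fin 1) → ℝ}
    (hVpos : ∀ y, 0 ≤ V y) (hVloc : LocallyIntegrable V volume)
    {C : ℝ} (hC1 : 1 ≤ C)
    (x : EuclideanSpace ℝ (Fin 1)) (r : ℝ) (hr : 0 < r)
    (hdoub0 : ∀ (ρ : ℝ), 0 < ρ →
      (∫ y in ball x (2*ρ), V y) ≤ C * ((∫ y in ball x ρ, V y) + ρ⁻¹)) :
    (∫ s in Ioo (-(2*r)) (2*r), (∫ y in ball x (Real.sqrt ((2*r)^2 - s^2)), V y)) ≤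
      4*C*((∫ u in Ioo (-r) r, (∫ y in ball x (Real.sqrt (r^2 - u^2)), V y)) + 1) := by
  set G : ℝ → ℝ := fun ρ => ∫ y in ball x ρ, V y with hGdef
  have hdoub : ∀ (ρ : ℝ), 0 < ρ → G (2*ρ) ≤ C * (G ρ + ρ⁻¹) := hdoub0
  have hGm : Monotone G := Gmono hVpos hVloc x
  have hG0 : ∀ ρ, 0 ≤ G ρ := fun ρ => Gnonneg hVpos x ρ
  set c : ℝ := r / Real.sqrt 5 with hc
  have h5 : (0:ℝ) < Real.sqrt 5 := Real.sqrt_pos.2 (by norm_num)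
  have hcpos : 0 < c := div_pos hr h5
  have hr2 : r^2 = 5*c^2 := by
    rw [hc, div_pow, Real.sq_sqrt (by norm_num : (0:ℝ) ≤ 5)]
    field_simp
  have h2cr : 2*c < r := by
    nlinarith [sq_nonneg (r - 2*c), sq_nonneg (r + 2*c)]
  have h4c2r : 4*c < 2*r := by linarith
  have hCpos : 0 < C := lt_of_lt_of_le one_pos hC1
  set F2 : ℝ → ℝ := fun s => G (Real.sqrt ((2*r)^2 - s^2)) with hF2
  set Fr : ℝ → ℝ := fun u => G (Real.sqrt (r^2 - u^2)) with hFr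
  set Fh : ℝ → ℝ := fun s => G (Real.sqrt (r^2 - (s/2)^2)) with hFh
  show (∫ s in Ioo (-(2*r)) (2*r), F2 s) ≤ 4*C*((∫ u in Ioo (-r) r, Fr u) + 1)
  have mF2 : Measurable (fun s : ℝ => Real.sqrt ((2*r)^2 - s^2)) :=
    (Real.continuous_sqrt.comp (continuous_const.sub (continuous_pow 2))).measurable
  have mFr : Measurable (fun u : ℝ => Real.sqrt (r^2 - u^2)) :=
    (Real.continuous_sqrt.comp (continuous_const.sub (continuous_pow 2))).measurable
  have mFh : Measurable (fun s : ℝ => Real.sqrt (r^2 - (s/2)^2)) :=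
    (Real.continuous_sqrt.comp (continuous_const.sub
      ((continuous_id.div_const 2).pow 2))).measurable
  have bF2 : ∀ s : ℝ, Real.sqrt ((2*r)^2 - s^2) ≤ 2*r := fun s => by
    calc Real.sqrt ((2*r)^2 - s^2) ≤ Real.sqrt ((2*r)^2) :=
          Real.sqrt_le_sqrt (by nlinarith [sq_nonneg s])
      _ = 2*r := Real.sqrt_sq (by linarith)
  have bFr : ∀ u : ℝ, Real.sqrt (r^2 - u^2) ≤ 2*r := fun u => by
    calc Real.sqrt (r^2 - u^2) ≤ Real.sqrt ((2*r)^2) :=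
          Real.sqrt_le_sqrt (by nlinarith [sq_nonneg u])
      _ = 2*r := Real.sqrt_sq (by linarith)
  have bFh : ∀ s : ℝ, Real.sqrt (r^2 - (s/2)^2) ≤ 2*r := fun s => by
    calc Real.sqrt (r^2 - (s/2)^2) ≤ Real.sqrt ((2*r)^2) :=
          Real.sqrt_le_sqrt (by nlinarith [sq_nonneg (s/2)])
      _ = 2*r := Real.sqrt_sq (by linarith)
  have iF2 : ∀ a b : ℝ, IntegrableOn F2 (Ioo a b) volume :=
    fun a b => GcompInt hVpos hVloc x mF2 bF2 a b
  have iFr : ∀ a b : ℝ, IntegrableOn Fr (Ioo a b) volume :=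
    fun a b => GcompInt hVpos hVloc x mFr bFr a b
  have iFh : ∀ a b : ℝ, IntegrableOn Fh (Ioo a b) volume :=
    fun a b => GcompInt hVpos hVloc x mFh bFh a b
  have iF2' : ∀ a b : ℝ, IntegrableOn F2 (Ico a b) volume := fun a b =>
    (iF2 (a-1) b).mono_set (fun s hs => ⟨by linarith [hs.1], hs.2⟩)
  have iFh' : ∀ a b : ℝ, IntegrableOn Fh (Ico a b) volume := fun a b =>
    (iFh (a-1) b).mono_set (fun s hs => ⟨by linarith [hs.1], hs.2⟩)
  have nFr : ∀ u : ℝ, 0 ≤ Fr u := fun u => hG0 _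
  have nF2 : ∀ s : ℝ, 0 ≤ F2 s := fun s => hG0 _
  have hsplit : ∫ s in Ioo (-(2*r)) (2*r), F2 s =
      (∫ s in Ioo (-(2*r)) (-(4*c)), F2 s) + ((∫ s in Ico (-(4*c)) (-(2*c)), F2 s) +
        ((∫ s in Ico (-(2*c)) (2*c), F2 s) + ((∫ s in Ico (2*c) (4*c), F2 s) +
          (∫ s in Ico (4*c) (2*r), F2 s)))) := by
    have hU : Ioo (-(2*r)) (2*r) = Ioo (-(2*r)) (-(4*c)) ∪ (Ico (-(4*c)) (-(2*c)) ∪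
        (Ico (-(2*c)) (2*c) ∪ (Ico (2*c) (4*c) ∪ Ico (4*c) (2*r)))) := by
      ext s
      simp only [mem_Ioo, mem_Ico, mem_union]
      constructor
      · rintro ⟨hg1, hg2⟩
        rcases lt_or_ge s (-(4*c)) with h | h
        · exact Or.inl ⟨hg1, h⟩
        rcases lt_or_ge s (-(2*c)) with h' | h'
        · exact Or.inr (Or.inl ⟨h, h'⟩)
        rcases lt_or_ge s (2*c) with hp | hp
        · exact Or.inr (Or.inr (Or.inl ⟨h', hp⟩))
        rcases lt_or_ge s (4*c) with hq | hq
        · exact Or.inr (Or.inr (Or.inr (Or.inl ⟨hp, hq⟩)))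
        · exact Or.inr (Or.inr (Or.inr (Or.inr ⟨hq, hg2⟩)))
      · rintro (⟨hg1, hg2⟩ | ⟨hg1, hg2⟩ | ⟨hg1, hg2⟩ | ⟨hg1, hg2⟩ | ⟨hg1, hg2⟩) <;>
          constructor <;> linarith
    rw [hU]
    have int1 := iF2 (-(2*r)) (-(4*c))
    have int2 := iF2' (-(4*c)) (-(2*c))
    have int3 := iF2' (-(2*c)) (2*c)
    have int4 := iF2' (2*c) (4*c)
    have int5 := iF2' (4*c) (2*r)
    have m5 : MeasurableSet (Ico (2*c) (4*c) ∪ Ico (4*c) (2*r)) :=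
      measurableSet_Ico.union measurableSet_Ico
    have m4 : MeasurableSet (Ico (-(2*c)) (2*c) ∪ (Ico (2*c) (4*c) ∪ Ico (4*c) (2*r))) :=
      measurableSet_Ico.union m5
    have m3 : MeasurableSet (Ico (-(4*c)) (-(2*c)) ∪ (Ico (-(2*c)) (2*c) ∪
        (Ico (2*c) (4*c) ∪ Ico (4*c) (2*r)))) := measurableSet_Ico.union m4
    rw [setIntegral_union ?d1 m3 int1 (int2.union (int3.union (int4.union int5)))]
    case d1 =>
      rw [Set.disjoint_left]
      rintro s ⟨_, h2⟩ (h|h|h|h) <;> simp only [mem_Ico] at h <;> linarith [h.1, hcpos]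
    rw [setIntegral_union ?d2 m4 int2 (int3.union (int4.union int5))]
    case d2 =>
      rw [Set.disjoint_left]
      rintro s ⟨_, h2⟩ (h|h|h) <;> simp only [mem_Ico] at h <;> linarith [h.1, hcpos]
    rw [setIntegral_union ?d3 m5 int3 (int4.union int5)]
    case d3 =>
      rw [Set.disjoint_left]
      rintro s ⟨_, h2⟩ (h|h) <;> simp only [mem_Ico] at h <;> linarith [h.1, hcpos]
    rw [setIntegral_union ?d4 measurableSet_Ico int4 int5]
    case d4 =>
      rw [Set.disjoint_left]
      rintro s ⟨_, h2⟩ ⟨h3, _⟩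
      linarith
  have sqrt2rho : ∀ s : ℝ, Real.sqrt ((2*r)^2 - s^2) = 2 * Real.sqrt (r^2 - (s/2)^2) := by
    intro s
    rw [show (2*r)^2 - s^2 = 2^2 * (r^2 - (s/2)^2) by ring, Real.sqrt_mul (by norm_num),
      Real.sqrt_sq (by norm_num : (0:ℝ) ≤ 2)]
  have hvol3 : (volume (Ico (-(2*c)) (2*c))).toReal = 4*c := by
    rw [Real.volume_Ico, ENNReal.toReal_ofReal (by linarith)]
    ring
  have hP3 : (∫ s in Ico (-(2*c)) (2*c), F2 s) ≤
      C * (∫ s in Ico (-(2*c)) (2*c), Fh s) + 2*C := by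
    have hpt : ∀ s ∈ Ico (-(2*c)) (2*c), F2 s ≤ C * Fh s + C * (2*c)⁻¹ := by
      intro s hs
      rcases hs with ⟨hs1, hs2⟩
      have hρ2 : (Real.sqrt (r^2 - (s/2)^2))^2 = r^2 - (s/2)^2 :=
        Real.sq_sqrt (by nlinarith)
      have hρ2c : 2*c ≤ Real.sqrt (r^2 - (s/2)^2) := by
        rw [show 2*c = Real.sqrt ((2*c)^2) from (Real.sqrt_sq (by linarith)).symm]
        apply Real.sqrt_le_sqrt
        nlinarith
      have hρpos : 0 < Real.sqrt (r^2 - (s/2)^2) := lt_of_lt_of_le (by linarith) hρ2c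
      have h3 : (Real.sqrt (r^2 - (s/2)^2))⁻¹ ≤ (2*c)⁻¹ :=
        inv_anti₀ (by linarith) hρ2c
      show G (Real.sqrt ((2*r)^2 - s^2)) ≤ C * Fh s + C * (2*c)⁻¹
      rw [sqrt2rho s]
      calc G (2 * Real.sqrt (r^2 - (s/2)^2)) ≤
            C * (G (Real.sqrt (r^2 - (s/2)^2)) + (Real.sqrt (r^2 - (s/2)^2))⁻¹) :=
          hdoub _ hρpos
        _ ≤ C * (Fh s + (2*c)⁻¹) := by
            apply mul_le_mul_of_nonneg_left _ hCpos.le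
            exact add_le_add le_rfl h3
        _ = C * Fh s + C * (2*c)⁻¹ := by ring
    calc (∫ s in Ico (-(2*c)) (2*c), F2 s)
        ≤ ∫ s in Ico (-(2*c)) (2*c), (C * Fh s + C * (2*c)⁻¹) := by
          apply setIntegral_mono_on (iF2' _ _) _ measurableSet_Ico hpt
          exact ((iFh' _ _).const_mul C).add (integrableOn_const measure_Ico_lt_top.ne)
      _ = C * (∫ s in Ico (-(2*c)) (2*c), Fh s) +
            (volume (Ico (-(2*c)) (2*c))).toReal • (C * (2*c)⁻¹) := by
          rw [integral_add ((iFh' _ _).const_mul C)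
            (integrableOn_const measure_Ico_lt_top.ne),
            integral_const_mul, setIntegral_const, measureReal_def]
      _ = C * (∫ s in Ico (-(2*c)) (2*c), Fh s) + 2*C := by
          rw [hvol3, smul_eq_mul]
          congr 1
          field_simp
          ring
  have hFh2 : (∫ s in Ico (-(2*c)) (2*c), Fh s) = 2 * ∫ u in Ioo (-c) c, Fr u := by
    rw [integral_Ico_eq_integral_Ioo]
    have himg : (fun u : ℝ => 2*u) '' Ioo (-c) c = Ioo (-(2*c)) (2*c) := by
      ext s
      simp only [mem_image, mem_Ioo]
      constructor
      · rintro ⟨u, ⟨h1, h2⟩, rfl⟩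
        constructor <;> linarith
      · rintro ⟨h1, h2⟩
        exact ⟨s/2, ⟨by linarith, by linarith⟩, by ring⟩
    have hderiv : ∀ u ∈ Ioo (-c) c, HasDerivWithinAt (fun u : ℝ => 2*u) 2 (Ioo (-c) c) u :=
      fun u _ => (by simpa using (hasDerivAt_id u).const_mul 2 : HasDerivAt (fun u : ℝ => 2*u) 2 u).hasDerivWithinAt
    have hinj : InjOn (fun u : ℝ => 2*u) (Ioo (-c) c) := fun a _ b _ h => by
      simp only at h; linarith
    rw [← himg, integral_image_eq_integral_abs_deriv_smul measurableSet_Ioo hderiv hinj Fh]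
    rw [← integral_const_mul]
    apply setIntegral_congr_fun measurableSet_Ioo
    intro u _
    show |(2:ℝ)| • Fh (2*u) = 2 * Fr u
    rw [abs_of_nonneg (by norm_num : (0:ℝ) ≤ 2), smul_eq_mul]
    congr 1
    show G (Real.sqrt (r^2 - (2*u/2)^2)) = G (Real.sqrt (r^2 - u^2))
    norm_num
  have hdoub4c : G (4*c) ≤ C * (G (2*c) + (2*c)⁻¹) := by
    have h := hdoub (2*c) (by linarith)
    rwa [show 2*(2*c) = 4*c by ring] at h
  have hband : ∀ (a b : ℝ), a < b → (∀ s ∈ Ico a b, Real.sqrt ((2*r)^2 - s^2) ≤ 4*c) →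
      (∫ s in Ico a b, F2 s) ≤ (b - a) * (C * (G (2*c) + (2*c)⁻¹)) := by
    intro a b hab hbd
    have hpt : ∀ s ∈ Ico a b, F2 s ≤ C * (G (2*c) + (2*c)⁻¹) := by
      intro s hs
      refine le_trans ?_ hdoub4c
      exact hGm (hbd s hs)
    calc (∫ s in Ico a b, F2 s) ≤ ∫ _ in Ico a b, (C * (G (2*c) + (2*c)⁻¹)) := by
          apply setIntegral_mono_on (iF2' _ _) _ measurableSet_Ico hpt
          exact integrableOn_const measure_Ico_lt_top.ne
      _ = (b - a) * (C * (G (2*c) + (2*c)⁻¹)) := by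
          rw [setIntegral_const, measureReal_def, Real.volume_Ico, ENNReal.toReal_ofReal (by linarith),
            smul_eq_mul]
  have hP2R : (∫ s in Ico (2*c) (4*c), F2 s) ≤ (2*c) * (C * (G (2*c) + (2*c)⁻¹)) := by
    have h := hband (2*c) (4*c) (by linarith) (by
      intro s hs
      rcases hs with ⟨h1, h2⟩
      rw [show (4:ℝ)*c = Real.sqrt ((4*c)^2) from (Real.sqrt_sq (by linarith)).symm]
      apply Real.sqrt_le_sqrt
      nlinarith)
    rwa [show 4*c - 2*c = 2*c by ring] at h
  have hP2L : (∫ s in Ico (-(4*c)) (-(2*c)), F2 s) ≤ (2*c) * (C * (G (2*c) + (2*c)⁻¹)) := by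
    have h := hband (-(4*c)) (-(2*c)) (by linarith) (by
      intro s hs
      rcases hs with ⟨h1, h2⟩
      rw [show (4:ℝ)*c = Real.sqrt ((4*c)^2) from (Real.sqrt_sq (by linarith)).symm]
      apply Real.sqrt_le_sqrt
      nlinarith)
    rwa [show -(2*c) - -(4*c) = 2*c by ring] at h
  have hAvg : (2*c) * G (2*c) ≤ ∫ u in Ioo (-c) c, Fr u := by
    have hpt : ∀ u ∈ Ioo (-c) c, G (2*c) ≤ Fr u := by
      intro u hu
      rcases hu with ⟨h1, h2⟩
      apply hGm
      rw [show (2:ℝ)*c = Real.sqrt ((2*c)^2) from (Real.sqrt_sq (by linarith)).symm]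
      apply Real.sqrt_le_sqrt
      nlinarith
    have hv : (volume (Ioo (-c) c)).toReal = 2*c := by
      rw [Real.volume_Ioo, ENNReal.toReal_ofReal (by linarith)]
      ring
    calc (2*c) * G (2*c) = (volume (Ioo (-c) c)).toReal * G (2*c) := by rw [hv]
      _ = ∫ _ in Ioo (-c) c, G (2*c) := by rw [setIntegral_const, measureReal_def, smul_eq_mul]
      _ ≤ ∫ u in Ioo (-c) c, Fr u :=
          setIntegral_mono_on (integrableOn_const measure_Ioo_lt_top.ne)
            (iFr (-c) c) measurableSet_Ioo hpt
  have hsq3 : ∀ u : ℝ, (0:ℝ) ≤ u^2 + 3*r^2 := fun u => by positivity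
  have habs1 : ∀ u : ℝ, |(2*u)/(2*Real.sqrt (u^2 + 3*r^2))| ≤ 1 := by
    intro u
    rcases eq_or_ne (2*Real.sqrt (u^2 + 3*r^2)) 0 with h0 | h0
    · rw [div_eq_zero_iff.2 (Or.inr h0)]; norm_num
    have hpos : 0 < Real.sqrt (u^2 + 3*r^2) := by
      rcases lt_or_eq_of_le (Real.sqrt_nonneg (u^2+3*r^2)) with h | h
      · exact h
      · exact absurd (by rw [← h]; ring) h0
    have hpos2 : (0:ℝ) < 2*Real.sqrt (u^2 + 3*r^2) := by linarith
    rw [abs_div, abs_of_pos hpos2, div_le_one hpos2]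
    have : |u| ≤ Real.sqrt (u^2 + 3*r^2) := by
      rw [show |u| = Real.sqrt (|u|^2) from (Real.sqrt_sq (abs_nonneg u)).symm]
      apply Real.sqrt_le_sqrt
      rw [sq_abs]
      nlinarith [sq_nonneg r]
    calc |2*u| = 2*|u| := by rw [abs_mul]; norm_num
      _ ≤ 2*Real.sqrt (u^2 + 3*r^2) := by linarith
  have mGline : Measurable (fun u : ℝ => F2 (Real.sqrt (u^2 + 3*r^2))) := by
    apply hGm.measurable.comp
    apply mF2.comp
    exact (Real.continuous_sqrt.comp ((continuous_pow 2).add continuous_const)).measurable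
  have mDer0 : Measurable (fun u : ℝ => (2*u)/(2*Real.sqrt (u^2 + 3*r^2))) := by
    apply Measurable.div (measurable_const.mul measurable_id)
    exact ((Real.continuous_sqrt.comp ((continuous_pow 2).add
      continuous_const)).measurable).const_mul 2
  have mDer : Measurable (fun u : ℝ => |(2*u)/(2*Real.sqrt (u^2 + 3*r^2))|) := mDer0.abs
  have iLHS : ∀ a b : ℝ, IntegrableOn
      (fun u => |(2*u)/(2*Real.sqrt (u^2 + 3*r^2))| • F2 (Real.sqrt (u^2 + 3*r^2)))
      (Ioo a b) volume := by
    intro a b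
    apply Integrable.mono' (g := fun _ => G (2*r))
      (integrableOn_const measure_Ioo_lt_top.ne)
    · exact ((mDer.smul mGline)).aestronglyMeasurable
    · refine Eventually.of_forall fun u => ?_
      rw [smul_eq_mul, Real.norm_eq_abs, abs_mul, abs_abs,
        abs_of_nonneg (nF2 _)]
      calc |(2*u)/(2*Real.sqrt (u^2 + 3*r^2))| * F2 (Real.sqrt (u^2 + 3*r^2))
          ≤ 1 * F2 (Real.sqrt (u^2 + 3*r^2)) :=
            mul_le_mul_of_nonneg_right (habs1 u) (nF2 _)
        _ = F2 (Real.sqrt (u^2 + 3*r^2)) := one_mul _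
        _ ≤ G (2*r) := hGm (bF2 _)
  have hP1R : (∫ s in Ico (4*c) (2*r), F2 s) ≤ (1/2) * ∫ u in Ioo c r, Fr u := by
    rw [integral_Ico_eq_integral_Ioo]
    have himg := imgR r c hr hcpos hr2 h2cr
    have hderiv : ∀ u ∈ Ioo c r, HasDerivWithinAt (fun u : ℝ => Real.sqrt (u^2 + 3*r^2))
        ((2*u)/(2*Real.sqrt (u^2 + 3*r^2))) (Ioo c r) u := by
      intro u _
      have h1 : HasDerivAt (fun u : ℝ => u^2 + 3*r^2) (2*u) u := by
        simpa using (hasDerivAt_pow 2 u).add_const (3*r^2)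
      exact (h1.sqrt (by positivity)).hasDerivWithinAt
    have hinj : InjOn (fun u : ℝ => Real.sqrt (u^2 + 3*r^2)) (Ioo c r) := by
      intro a ha b hb hab
      simp only at hab
      have h := congrArg (fun t : ℝ => t^2) hab
      simp only [Real.sq_sqrt (hsq3 a), Real.sq_sqrt (hsq3 b)] at h
      have hfac : (a - b)*(a + b) = 0 := by nlinarith
      rcases mul_eq_zero.1 hfac with h' | h'
      · linarith
      · exfalso
        rcases ha with ⟨ha1, _⟩
        rcases hb with ⟨hb1, _⟩
        linarith
    rw [← himg, integral_image_eq_integral_abs_deriv_smul measurableSet_Ioo hderiv hinj F2]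
    have hptw : ∀ u ∈ Ioo c r,
        |(2*u)/(2*Real.sqrt (u^2 + 3*r^2))| • F2 (Real.sqrt (u^2 + 3*r^2)) ≤ (1/2) * Fr u := by
      intro u hu
      rcases hu with ⟨h1, h2⟩
      have hupos : 0 < u := lt_trans hcpos h1
      have hs3 : 0 < Real.sqrt (u^2 + 3*r^2) := Real.sqrt_pos.2 (by positivity)
      have hF2eq : F2 (Real.sqrt (u^2 + 3*r^2)) = Fr u := by
        show G (Real.sqrt ((2*r)^2 - (Real.sqrt (u^2 + 3*r^2))^2)) = G (Real.sqrt (r^2 - u^2))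
        rw [Real.sq_sqrt (hsq3 u), show (2*r)^2 - (u^2 + 3*r^2) = r^2 - u^2 by ring]
      have habs : |(2*u)/(2*Real.sqrt (u^2 + 3*r^2))| = (2*u)/(2*Real.sqrt (u^2 + 3*r^2)) :=
        abs_of_nonneg (by positivity)
      have hhalf : (2*u)/(2*Real.sqrt (u^2 + 3*r^2)) ≤ 1/2 := by
        rw [div_le_div_iff₀ (by positivity) (by norm_num)]
        have h4 : 2*u ≤ Real.sqrt (u^2 + 3*r^2) := by
          rw [show 2*u = Real.sqrt ((2*u)^2) from (Real.sqrt_sq (by linarith)).symm]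
          apply Real.sqrt_le_sqrt
          nlinarith
        linarith
      rw [habs, hF2eq, smul_eq_mul]
      exact mul_le_mul_of_nonneg_right hhalf (nFr u)
    calc (∫ u in Ioo c r, |(2*u)/(2*Real.sqrt (u^2 + 3*r^2))| • F2 (Real.sqrt (u^2 + 3*r^2)))
        ≤ ∫ u in Ioo c r, (1/2) * Fr u :=
          setIntegral_mono_on (iLHS c r) ((iFr c r).const_mul _) measurableSet_Ioo hptw
      _ = (1/2) * ∫ u in Ioo c r, Fr u := integral_const_mul _ _
  have hP1L : (∫ s in Ioo (-(2*r)) (-(4*c)), F2 s) ≤ (1/2) * ∫ u in Ioo (-r) (-c), Fr u := by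
    have himg := imgL r c hr hcpos hr2 h2cr
    have hderiv : ∀ u ∈ Ioo (-r) (-c), HasDerivWithinAt (fun u : ℝ => -Real.sqrt (u^2 + 3*r^2))
        (-((2*u)/(2*Real.sqrt (u^2 + 3*r^2)))) (Ioo (-r) (-c)) u := by
      intro u _
      have h1 : HasDerivAt (fun u : ℝ => u^2 + 3*r^2) (2*u) u := by
        simpa using (hasDerivAt_pow 2 u).add_const (3*r^2)
      exact ((h1.sqrt (by positivity)).neg).hasDerivWithinAt
    have hinj : InjOn (fun u : ℝ => -Real.sqrt (u^2 + 3*r^2)) (Ioo (-r) (-c)) := by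
      intro a ha b hb hab
      simp only [neg_inj] at hab
      have h := congrArg (fun t : ℝ => t^2) hab
      simp only [Real.sq_sqrt (hsq3 a), Real.sq_sqrt (hsq3 b)] at h
      have hfac : (a - b)*(a + b) = 0 := by nlinarith
      rcases mul_eq_zero.1 hfac with h' | h'
      · linarith
      · exfalso
        rcases ha with ⟨_, ha2⟩
        rcases hb with ⟨_, hb2⟩
        linarith
    rw [← himg, integral_image_eq_integral_abs_deriv_smul measurableSet_Ioo hderiv hinj F2]
    have hptw : ∀ u ∈ Ioo (-r) (-c),
        |-((2*u)/(2*Real.sqrt (u^2 + 3*r^2)))| • F2 (-Real.sqrt (u^2 + 3*r^2)) ≤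
          (1/2) * Fr u := by
      intro u hu
      rcases hu with ⟨h1, h2⟩
      have huneg : u < 0 := by nlinarith
      have hs3 : 0 < Real.sqrt (u^2 + 3*r^2) := Real.sqrt_pos.2 (by positivity)
      have hF2eq : F2 (-Real.sqrt (u^2 + 3*r^2)) = Fr u := by
        show G (Real.sqrt ((2*r)^2 - (-Real.sqrt (u^2 + 3*r^2))^2)) = G (Real.sqrt (r^2 - u^2))
        rw [neg_sq, Real.sq_sqrt (hsq3 u), show (2*r)^2 - (u^2 + 3*r^2) = r^2 - u^2 by ring]
      have habs : |-((2*u)/(2*Real.sqrt (u^2 + 3*r^2)))| =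
          (2*(-u))/(2*Real.sqrt (u^2 + 3*r^2)) := by
        rw [abs_neg, abs_div, abs_of_pos (by linarith : (0:ℝ) < 2*Real.sqrt (u^2 + 3*r^2)),
          show |2*u| = 2*(-u) by rw [abs_mul, abs_of_neg huneg]; norm_num]
      have hhalf : (2*(-u))/(2*Real.sqrt (u^2 + 3*r^2)) ≤ 1/2 := by
        rw [div_le_div_iff₀ (by positivity) (by norm_num)]
        have h4 : 2*(-u) ≤ Real.sqrt (u^2 + 3*r^2) := by
          rw [show 2*(-u) = Real.sqrt ((2*(-u))^2) from (Real.sqrt_sq (by linarith)).symm]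
          apply Real.sqrt_le_sqrt
          nlinarith
        linarith
      rw [habs, hF2eq, smul_eq_mul]
      exact mul_le_mul_of_nonneg_right hhalf (nFr u)
    have iLHSneg : IntegrableOn
        (fun u => |-((2*u)/(2*Real.sqrt (u^2 + 3*r^2)))| • F2 (-Real.sqrt (u^2 + 3*r^2)))
        (Ioo (-r) (-c)) volume := by
      apply Integrable.mono' (g := fun _ => G (2*r))
        (integrableOn_const measure_Ioo_lt_top.ne)
      · apply Measurable.aestronglyMeasurable
        apply Measurable.fun_smul
        · exact mDer0.neg.abs
        · apply hGm.measurable.comp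
          apply mF2.comp
          exact ((Real.continuous_sqrt.comp ((continuous_pow 2).add
            continuous_const)).measurable).neg
      · refine Eventually.of_forall fun u => ?_
        rw [smul_eq_mul, Real.norm_eq_abs, abs_mul, abs_abs, abs_of_nonneg (nF2 _), abs_neg]
        calc |(2*u)/(2*Real.sqrt (u^2 + 3*r^2))| * F2 (-Real.sqrt (u^2 + 3*r^2))
            ≤ 1 * F2 (-Real.sqrt (u^2 + 3*r^2)) :=
              mul_le_mul_of_nonneg_right (habs1 u) (nF2 _)
          _ = F2 (-Real.sqrt (u^2 + 3*r^2)) := one_mul _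
          _ ≤ G (2*r) := hGm (bF2 _)
    calc (∫ u in Ioo (-r) (-c),
            |-((2*u)/(2*Real.sqrt (u^2 + 3*r^2)))| • F2 (-Real.sqrt (u^2 + 3*r^2)))
        ≤ ∫ u in Ioo (-r) (-c), (1/2) * Fr u :=
          setIntegral_mono_on iLHSneg ((iFr _ _).const_mul _) measurableSet_Ioo hptw
      _ = (1/2) * ∫ u in Ioo (-r) (-c), Fr u := integral_const_mul _ _
  -- final assembly
  have nIL : 0 ≤ ∫ u in Ioo (-r) (-c), Fr u :=
    setIntegral_nonneg measurableSet_Ioo (fun u _ => nFr u)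
  have nIM : 0 ≤ ∫ u in Ioo (-c) c, Fr u :=
    setIntegral_nonneg measurableSet_Ioo (fun u _ => nFr u)
  have nIR : 0 ≤ ∫ u in Ioo c r, Fr u :=
    setIntegral_nonneg measurableSet_Ioo (fun u _ => nFr u)
  have hSsum : (∫ u in Ioo (-r) (-c), Fr u) + ((∫ u in Ioo (-c) c, Fr u) +
      (∫ u in Ioo c r, Fr u)) ≤ ∫ u in Ioo (-r) r, Fr u := by
    have e1 : (∫ u in Ioo (-r) (-c), Fr u) + ((∫ u in Ioo (-c) c, Fr u) +
        (∫ u in Ioo c r, Fr u)) = ∫ u in Ioo (-r) (-c) ∪ (Ioo (-c) c ∪ Ioo c r), Fr u := by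
      rw [setIntegral_union ?e2 (measurableSet_Ioo.union measurableSet_Ioo) (iFr _ _)
        ((iFr _ _).union (iFr _ _))]
      rw [setIntegral_union ?e3 measurableSet_Ioo (iFr _ _) (iFr _ _)]
      case e2 =>
        rw [Set.disjoint_left]
        rintro u ⟨_, h2⟩ (h|h) <;> simp only [mem_Ioo] at h <;> linarith [h.1]
      case e3 =>
        rw [Set.disjoint_left]
        rintro u ⟨_, h2⟩ ⟨h3, _⟩
        linarith
    rw [e1]
    apply setIntegral_mono_set (iFr (-r) r) (Eventually.of_forall fun u => nFr u)
    apply HasSubset.Subset.eventuallyLE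
    rintro u (h|h|h) <;> simp only [mem_Ioo] at h ⊢ <;> constructor <;> linarith [h.1, h.2]
  have hbandval : (2*c) * (C * (G (2*c) + (2*c)⁻¹)) = 2*c*C*G (2*c) + C := by
    field_simp
  have hAvg' : 2*C*((2*c) * G (2*c)) ≤ 2*C*(∫ u in Ioo (-c) c, Fr u) :=
    mul_le_mul_of_nonneg_left hAvg (by positivity)
  have hS4 : 4*C*((∫ u in Ioo (-r) (-c), Fr u) + ((∫ u in Ioo (-c) c, Fr u) +
      (∫ u in Ioo c r, Fr u))) ≤ 4*C*(∫ u in Ioo (-r) r, Fr u) :=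
    mul_le_mul_of_nonneg_left hSsum (by positivity)
  have hIL4 : (1/2)*(∫ u in Ioo (-r) (-c), Fr u) ≤ 4*C*(∫ u in Ioo (-r) (-c), Fr u) := by
    nlinarith [nIL, hC1]
  have hIR4 : (1/2)*(∫ u in Ioo c r, Fr u) ≤ 4*C*(∫ u in Ioo c r, Fr u) := by
    nlinarith [nIR, hC1]
  rw [hFh2] at hP3
  rw [hsplit]
  nlinarith [hP3, hP2R, hP2L, hP1R, hP1L, hbandval, hAvg', hS4, hIL4, hIR4, nIM, hCpos]


private lemma d2main {V : EuclideanSpace ℝ (Fin 2) → ℝ}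
    (hVpos : ∀ y, 0 ≤ V y) (hVloc : LocallyIntegrable V volume)
    {C : ℝ} (hC : 0 < C)
    (x : EuclideanSpace ℝ (Fin 2)) (r : ℝ) (hr : 0 < r)
    (hdoub0 : ∀ (ρ : ℝ), 0 < ρ →
      (∫ y in ball x (2*ρ), V y) ≤ C * ((∫ y in ball x ρ, V y) + 1)) :
    (∫ s in Ioo (-(2*r)) (2*r), (∫ y in ball x (Real.sqrt ((2*r)^2 - s^2)), V y)) ≤
      4*C*((∫ u in Ioo (-r) r, (∫ y in ball x (Real.sqrt (r^2 - u^2)), V y)) + r) := by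
  set G : ℝ → ℝ := fun ρ => ∫ y in ball x ρ, V y with hGdef
  have hdoub : ∀ (ρ : ℝ), 0 < ρ → G (2*ρ) ≤ C * (G ρ + 1) := hdoub0
  have hGm : Monotone G := Gmono hVpos hVloc x
  have hG0 : ∀ ρ, 0 ≤ G ρ := fun ρ => Gnonneg hVpos x ρ
  set F2 : ℝ → ℝ := fun s => G (Real.sqrt ((2*r)^2 - s^2)) with hF2
  set Fr : ℝ → ℝ := fun u => G (Real.sqrt (r^2 - u^2)) with hFr
  set Fh : ℝ → ℝ := fun s => G (Real.sqrt (r^2 - (s/2)^2)) with hFh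
  show (∫ s in Ioo (-(2*r)) (2*r), F2 s) ≤ 4*C*((∫ u in Ioo (-r) r, Fr u) + r)
  have mFr : Measurable (fun u : ℝ => Real.sqrt (r^2 - u^2)) :=
    (Real.continuous_sqrt.comp (continuous_const.sub (continuous_pow 2))).measurable
  have mF2 : Measurable (fun s : ℝ => Real.sqrt ((2*r)^2 - s^2)) :=
    (Real.continuous_sqrt.comp (continuous_const.sub (continuous_pow 2))).measurable
  have mFh : Measurable (fun s : ℝ => Real.sqrt (r^2 - (s/2)^2)) :=
    (Real.continuous_sqrt.comp (continuous_const.sub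
      ((continuous_id.div_const 2).pow 2))).measurable
  have bF2 : ∀ s : ℝ, Real.sqrt ((2*r)^2 - s^2) ≤ 2*r := fun s => by
    calc Real.sqrt ((2*r)^2 - s^2) ≤ Real.sqrt ((2*r)^2) :=
          Real.sqrt_le_sqrt (by nlinarith [sq_nonneg s])
      _ = 2*r := Real.sqrt_sq (by linarith)
  have bFr : ∀ u : ℝ, Real.sqrt (r^2 - u^2) ≤ 2*r := fun u => by
    calc Real.sqrt (r^2 - u^2) ≤ Real.sqrt ((2*r)^2) :=
          Real.sqrt_le_sqrt (by nlinarith [sq_nonneg u])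
      _ = 2*r := Real.sqrt_sq (by linarith)
  have bFh : ∀ s : ℝ, Real.sqrt (r^2 - (s/2)^2) ≤ 2*r := fun s => by
    calc Real.sqrt (r^2 - (s/2)^2) ≤ Real.sqrt ((2*r)^2) :=
          Real.sqrt_le_sqrt (by nlinarith [sq_nonneg (s/2)])
      _ = 2*r := Real.sqrt_sq (by linarith)
  have iF2 : ∀ a b : ℝ, IntegrableOn F2 (Ioo a b) volume :=
    fun a b => GcompInt hVpos hVloc x mF2 bF2 a b
  have iFr : ∀ a b : ℝ, IntegrableOn Fr (Ioo a b) volume :=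
    fun a b => GcompInt hVpos hVloc x mFr bFr a b
  have iFh : ∀ a b : ℝ, IntegrableOn Fh (Ioo a b) volume :=
    fun a b => GcompInt hVpos hVloc x mFh bFh a b
  have sqrt2rho : ∀ s : ℝ, Real.sqrt ((2*r)^2 - s^2) = 2 * Real.sqrt (r^2 - (s/2)^2) := by
    intro s
    rw [show (2*r)^2 - s^2 = 2^2 * (r^2 - (s/2)^2) by ring, Real.sqrt_mul (by norm_num),
      Real.sqrt_sq (by norm_num : (0:ℝ) ≤ 2)]
  have hpt : ∀ s ∈ Ioo (-(2*r)) (2*r), F2 s ≤ C * Fh s + C := by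
    intro s hs
    rcases hs with ⟨hs1, hs2⟩
    have hρpos : 0 < Real.sqrt (r^2 - (s/2)^2) := Real.sqrt_pos.2 (by nlinarith)
    show G (Real.sqrt ((2*r)^2 - s^2)) ≤ C * Fh s + C
    rw [sqrt2rho s]
    calc G (2 * Real.sqrt (r^2 - (s/2)^2)) ≤ C * (G (Real.sqrt (r^2 - (s/2)^2)) + 1) :=
          hdoub _ hρpos
      _ = C * Fh s + C := by ring
  have hFh2 : (∫ s in Ioo (-(2*r)) (2*r), Fh s) = 2 * ∫ u in Ioo (-r) r, Fr u := by
    have himg : (fun u : ℝ => 2*u) '' Ioo (-r) r = Ioo (-(2*r)) (2*r) := by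
      ext s
      simp only [mem_image, mem_Ioo]
      constructor
      · rintro ⟨u, ⟨h1, h2⟩, rfl⟩
        constructor <;> linarith
      · rintro ⟨h1, h2⟩
        exact ⟨s/2, ⟨by linarith, by linarith⟩, by ring⟩
    have hderiv : ∀ u ∈ Ioo (-r) r, HasDerivWithinAt (fun u : ℝ => 2*u) 2 (Ioo (-r) r) u :=
      fun u _ => (by simpa using (hasDerivAt_id u).const_mul 2 :
        HasDerivAt (fun u : ℝ => 2*u) 2 u).hasDerivWithinAt
    have hinj : InjOn (fun u : ℝ => 2*u) (Ioo (-r) r) := fun a _ b _ h => by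
      simp only at h; linarith
    rw [← himg, integral_image_eq_integral_abs_deriv_smul measurableSet_Ioo hderiv hinj Fh]
    rw [← integral_const_mul]
    apply setIntegral_congr_fun measurableSet_Ioo
    intro u _
    show |(2:ℝ)| • Fh (2*u) = 2 * Fr u
    rw [abs_of_nonneg (by norm_num : (0:ℝ) ≤ 2), smul_eq_mul]
    congr 1
    show G (Real.sqrt (r^2 - (2*u/2)^2)) = G (Real.sqrt (r^2 - u^2))
    norm_num
  have hS0 : 0 ≤ ∫ u in Ioo (-r) r, Fr u :=
    setIntegral_nonneg measurableSet_Ioo (fun u _ => hG0 _)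
  calc (∫ s in Ioo (-(2*r)) (2*r), F2 s)
      ≤ ∫ s in Ioo (-(2*r)) (2*r), (C * Fh s + C) := by
        apply setIntegral_mono_on (iF2 _ _) _ measurableSet_Ioo hpt
        exact ((iFh _ _).const_mul C).add (integrableOn_const measure_Ioo_lt_top.ne)
    _ = C * (∫ s in Ioo (-(2*r)) (2*r), Fh s) +
          (volume (Ioo (-(2*r)) (2*r))).toReal • C := by
        rw [integral_add ((iFh _ _).const_mul C)
          (integrableOn_const measure_Ioo_lt_top.ne),
          integral_const_mul, setIntegral_const, measureReal_def]
    _ = C * (2 * ∫ u in Ioo (-r) r, Fr u) + (4*r) * C := by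
        rw [hFh2, Real.volume_Ioo, ENNReal.toReal_ofReal (by linarith), smul_eq_mul]
        congr 2
        ring
    _ ≤ 4*C*((∫ u in Ioo (-r) r, Fr u) + r) := by
        nlinarith [mul_nonneg hC.le hS0]

private lemma trivSmallC {V : EuclideanSpace ℝ (Fin 1) → ℝ}
    (hVpos : ∀ y, 0 ≤ V y) (hVloc : LocallyIntegrable V volume)
    {C : ℝ} (hC0 : 0 < C) (hC : C < 1)
    (x : EuclideanSpace ℝ (Fin 1))
    (hdoub : ∀ (ρ : ℝ), 0 < ρ →
      (∫ y in ball x (2*ρ), V y) ≤ C * ((∫ y in ball x ρ, V y) + ρ⁻¹)) :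
    ∀ ρ : ℝ, 0 < ρ → (∫ y in ball x ρ, V y) = 0 := by
  set G : ℝ → ℝ := fun ρ => ∫ y in ball x ρ, V y with hGdef
  have hdoub' : ∀ (ρ : ℝ), 0 < ρ → G (2*ρ) ≤ C * (G ρ + ρ⁻¹) := hdoub
  have hGm : Monotone G := Gmono hVpos hVloc x
  have hG0 : ∀ ρ, 0 ≤ G ρ := fun ρ => Gnonneg hVpos x ρ
  have key : ∀ Λ : ℝ, 0 < Λ → (1 - C) * G Λ ≤ C * Λ⁻¹ := by
    intro Λ hΛ
    have h1 : G Λ ≤ G (2*Λ) := hGm (by linarith)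
    have h2 := hdoub' Λ hΛ
    nlinarith
  intro ρ hρ
  show G ρ = 0
  refine le_antisymm ?_ (hG0 ρ)
  have hεbound : ∀ ε : ℝ, 0 < ε → G ρ ≤ ε := by
    intro ε hε
    set Λ : ℝ := max ρ (C/((1-C)*ε)) with hΛdef
    have hΛρ : ρ ≤ Λ := le_max_left _ _
    have hΛpos : 0 < Λ := lt_of_lt_of_le hρ hΛρ
    have hΛ2 : C/((1-C)*ε) ≤ Λ := le_max_right _ _
    have hC1 : (0:ℝ) < 1 - C := by linarith
    have h3 : C ≤ Λ*((1-C)*ε) := (div_le_iff₀ (mul_pos hC1 hε)).1 hΛ2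
    have h4 := key Λ hΛpos
    have h5 : G ρ ≤ G Λ := hGm hΛρ
    have hinv : Λ⁻¹ * Λ = 1 := inv_mul_cancel₀ (ne_of_gt hΛpos)
    -- (1-C) * G ρ ≤ C * Λ⁻¹ ≤ (1-C) * ε
    have h6 : C * Λ⁻¹ ≤ (1-C)*ε := by
      have := mul_le_mul_of_nonneg_left h3 (inv_nonneg.2 hΛpos.le)
      calc C * Λ⁻¹ = Λ⁻¹ * C := by ring
        _ ≤ Λ⁻¹ * (Λ*((1-C)*ε)) := this
        _ = (Λ⁻¹ * Λ) * ((1-C)*ε) := by ring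
        _ = (1-C)*ε := by rw [hinv]; ring
    nlinarith
  by_contra hcon
  push_neg at hcon
  have := hεbound ((G ρ)/2) (by linarith)
  linarith

private lemma d0arith {C v r : ℝ} (hC : 0 < C) (hv : 0 ≤ v) (hr : 0 < r)
    (hd : ∀ ρ : ℝ, 0 < ρ → v ≤ C*(v + (ρ^2)⁻¹)) :
    4*r*v ≤ 4*C*(2*r*v + r⁻¹) := by
  rcases le_or_gt (1/2) C with hC2 | hC2
  · have h1 : 0 ≤ r * v * (2*C - 1) := mul_nonneg (mul_nonneg hr.le hv) (by linarith)
    have h2 : 0 < C * r⁻¹ := by positivity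
    nlinarith
  · have hv0 : v = 0 := by
      by_contra hne
      have hvpos : 0 < v := lt_of_le_of_ne hv (Ne.symm hne)
      have h1C : (0:ℝ) < 1 - C := by linarith
      have hargpos : 0 < 2*C/((1-C)*v) := by positivity
      set ρ : ℝ := Real.sqrt (2*C/((1-C)*v)) with hρdef
      have hρpos : 0 < ρ := Real.sqrt_pos.2 hargpos
      have hρ2 : ρ^2 = 2*C/((1-C)*v) := Real.sq_sqrt hargpos.le
      have h := hd ρ hρpos
      rw [hρ2, inv_div] at h
      have hinvval : C * ((1-C)*v/(2*C)) = (1-C)*v/2 := by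
        field_simp
      nlinarith [h, hinvval]
    rw [hv0]
    have : 0 < C * r⁻¹ := by positivity
    nlinarith


/-- Doubling condition passes to the extension `Ṽ(x,t) = V(x)` on `ℝ^{d+1}`, for `d ≤ 2`:
`∫_{B((x,t),2r)} Ṽ ≤ 4 C_D (∫_{B((x,t),r)} Ṽ + r^{d-1})`. -/
theorem doubling_dimension_ascent
    (d : ℕ) (hd : d ≤ 2) (V : EuclideanSpace ℝ (Fin d) → ℝ)
    (hVmeas : Measurable V) (hVpos : ∀ x, 0 ≤ V x)
    (hVloc : LocallyIntegrable V volume)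
    (C_D : ℝ) (hCD : 0 < C_D)
    (hdoub : ∀ (x : EuclideanSpace ℝ (Fin d)) (r : ℝ), 0 < r →
      (∫ y in ball x (2*r), V y) ≤ C_D * ((∫ y in ball x r, V y) + r ^ ((d:ℝ) - 2)))
    (Vt : EuclideanSpace ℝ (Fin (d+1)) → ℝ)
    (hVt : ∀ z : EuclideanSpace ℝ (Fin (d+1)), Vt z = V (WithLp.toLp 2 (fun i : Fin d => z i.castSucc))) :
    ∀ (z : EuclideanSpace ℝ (Fin (d+1))) (r : ℝ), 0 < r →
      (∫ w in ball z (2*r), Vt w) ≤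
        4 * C_D * ((∫ w in ball z r, Vt w) + r ^ ((d:ℝ) - 1)) := by
  interval_cases d
  -- d = 0
  · intro z r hr
    have h2r : (0:ℝ) < 2*r := by linarith
    simp only [hVt]
    rw [sliceEq V hVloc z (WithLp.toLp 2 (fun i => z i.castSucc)) rfl (2*r) h2r,
        sliceEq V hVloc z (WithLp.toLp 2 (fun i => z i.castSucc)) rfl r hr]
    set x : EuclideanSpace ℝ (Fin 0) := (WithLp.toLp 2 (fun i => z i.castSucc)) with hx
    have huniv : ∀ ρ : ℝ, 0 < ρ → ball x ρ = univ := by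
      intro ρ hρ
      ext y
      simp only [mem_ball, mem_univ, iff_true]
      have hyx : y = x := PiLp.ext fun i => i.elim0
      rw [hyx, dist_self]
      exact hρ
    set v : ℝ := ∫ y, V y with hv
    have hv0 : 0 ≤ v := integral_nonneg hVpos
    have hT : (∫ s in Ioo (-(2*r)) (2*r),
        (∫ y in ball x (Real.sqrt ((2*r)^2 - s^2)), V y)) = 4*r*v := by
      rw [setIntegral_congr_fun (g := fun _ => v) measurableSet_Ioo ?he]
      case he =>
        intro s hs
        rcases hs with ⟨h1, h2⟩
        have hpos : 0 < Real.sqrt ((2*r)^2 - s^2) := Real.sqrt_pos.2 (by nlinarith)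
        show (∫ y in ball x (Real.sqrt ((2*r)^2 - s^2)), V y) = v
        rw [huniv _ hpos, hv, Measure.restrict_univ]
      rw [setIntegral_const, measureReal_def, Real.volume_Ioo, ENNReal.toReal_ofReal (by linarith), smul_eq_mul]
      ring
    have hS : (∫ u in Ioo (-r) r,
        (∫ y in ball x (Real.sqrt (r^2 - u^2)), V y)) = 2*r*v := by
      rw [setIntegral_congr_fun (g := fun _ => v) measurableSet_Ioo ?he2]
      case he2 =>
        intro u hu
        rcases hu with ⟨h1, h2⟩
        have hpos : 0 < Real.sqrt (r^2 - u^2) := Real.sqrt_pos.2 (by nlinarith)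
        show (∫ y in ball x (Real.sqrt (r^2 - u^2)), V y) = v
        rw [huniv _ hpos, hv, Measure.restrict_univ]
      rw [setIntegral_const, measureReal_def, Real.volume_Ioo, ENNReal.toReal_ofReal (by linarith), smul_eq_mul]
      ring
    rw [hT, hS, show ((0:ℕ):ℝ) - 1 = -((1:ℕ):ℝ) by norm_num, Real.rpow_neg hr.le,
      Real.rpow_natCast, pow_one]
    apply d0arith hCD hv0 hr
    intro ρ hρ
    have h := hdoub x ρ hρ
    rw [huniv _ (by linarith : (0:ℝ) < 2*ρ), huniv _ hρ, Measure.restrict_univ,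
      show ((0:ℕ):ℝ) - 2 = -((2:ℕ):ℝ) by norm_num, Real.rpow_neg hρ.le,
      Real.rpow_natCast] at h
    exact h
  -- d = 1
  · intro z r hr
    have h2r : (0:ℝ) < 2*r := by linarith
    simp only [hVt]
    rw [sliceEq V hVloc z (WithLp.toLp 2 (fun i => z i.castSucc)) rfl (2*r) h2r,
        sliceEq V hVloc z (WithLp.toLp 2 (fun i => z i.castSucc)) rfl r hr]
    set x : EuclideanSpace ℝ (Fin 1) := (WithLp.toLp 2 (fun i => z i.castSucc)) with hx
    rw [show ((1:ℕ):ℝ) - 1 = 0 by norm_num, Real.rpow_zero]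
    have hdoub' : ∀ (ρ : ℝ), 0 < ρ →
        (∫ y in ball x (2*ρ), V y) ≤ C_D * ((∫ y in ball x ρ, V y) + ρ⁻¹) := by
      intro ρ hρ
      have h := hdoub x ρ hρ
      rwa [show ((1:ℕ):ℝ) - 2 = -((1:ℕ):ℝ) by norm_num, Real.rpow_neg hρ.le,
        Real.rpow_natCast, pow_one] at h
    rcases le_or_gt 1 C_D with hC1 | hC1
    · exact d1main hVpos hVloc hC1 x r hr hdoub'
    · have hz := trivSmallC hVpos hVloc hCD hC1 x hdoub'
      have hT : (∫ s in Ioo (-(2*r)) (2*r),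
          (∫ y in ball x (Real.sqrt ((2*r)^2 - s^2)), V y)) = 0 := by
        rw [setIntegral_congr_fun (g := fun _ => (0:ℝ)) measurableSet_Ioo ?hz2]
        case hz2 =>
          intro s hs
          rcases hs with ⟨h1, h2⟩
          exact hz _ (Real.sqrt_pos.2 (by nlinarith))
        simp
      rw [hT]
      have hS0 : 0 ≤ ∫ u in Ioo (-r) r, (∫ y in ball x (Real.sqrt (r^2 - u^2)), V y) :=
        setIntegral_nonneg measurableSet_Ioo (fun u _ => Gnonneg hVpos x _)
      have h40 : (0:ℝ) < 4*C_D := by linarith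
      nlinarith
  -- d = 2
  · intro z r hr
    have h2r : (0:ℝ) < 2*r := by linarith
    simp only [hVt]
    rw [sliceEq V hVloc z (WithLp.toLp 2 (fun i => z i.castSucc)) rfl (2*r) h2r,
        sliceEq V hVloc z (WithLp.toLp 2 (fun i => z i.castSucc)) rfl r hr]
    set x : EuclideanSpace ℝ (Fin 2) := (WithLp.toLp 2 (fun i => z i.castSucc)) with hx
    rw [show ((2:ℕ):ℝ) - 1 = 1 by norm_num, Real.rpow_one]
    apply d2main hVpos hVloc hCD x r hr
    intro ρ hρ
    have h := hdoub x ρ hρ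
    rwa [show ((2:ℕ):ℝ) - 2 = 0 by norm_num, Real.rpow_zero] at h
end

section
/- For a polynomial V ≥ 0 on ℝ^d of degree ≤ D, there is a constant C depending only on d and D such that ∫_{B(x,2r)} V(y) dy ≤ C ∫_{B(x,r)} V(y) dy for all x ∈ ℝ^d and r > 0; in particular V satisfies the doubling condition. -/
open MeasureTheory Metric Filter
open scoped ENNReal Pointwise

namespace PolyDoublingAux

open MvPolynomial

variable {d : ℕ}

/-- Evaluation commutes with substitution (into `Polynomial`). -/
lemma eval_aeval_poly (g : Fin d → Polynomial ℝ) (P : MvPolynomial (Fin d) ℝ) (t : ℝ) :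
    Polynomial.eval t (MvPolynomial.aeval g P) =
      MvPolynomial.eval (fun i => Polynomial.eval t (g i)) P := by
  induction P using MvPolynomial.induction_on with
  | C a => simp
  | add p q hp hq => rw [map_add, Polynomial.eval_add, hp, hq, map_add]
  | mul_X p i hp =>
      rw [map_mul, Polynomial.eval_mul, hp, MvPolynomial.aeval_X, map_mul,
        MvPolynomial.eval_X]

/-- Evaluation commutes with substitution (into `MvPolynomial`). -/
lemma eval_aeval_mv (g : Fin d → MvPolynomial (Fin d) ℝ) (P : MvPolynomial (Fin d) ℝ)
    (z : Fin d → ℝ) :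
    MvPolynomial.eval z (MvPolynomial.aeval g P) =
      MvPolynomial.eval (fun i => MvPolynomial.eval z (g i)) P := by
  induction P using MvPolynomial.induction_on with
  | C a => simp
  | add p q hp hq => rw [map_add, map_add, hp, hq, map_add]
  | mul_X p i hp =>
      rw [map_mul, map_mul, hp, MvPolynomial.aeval_X, map_mul, MvPolynomial.eval_X]

/-- Substituting polynomials of total degree at most 1 does not increase total degree. -/
lemma totalDegree_aeval_le (g : Fin d → MvPolynomial (Fin d) ℝ)
    (hg : ∀ i, (g i).totalDegree ≤ 1) (p : MvPolynomial (Fin d) ℝ) :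
    (MvPolynomial.aeval g p).totalDegree ≤ p.totalDegree := by
  conv_lhs => rw [p.as_sum]
  rw [map_sum]
  refine (MvPolynomial.totalDegree_finset_sum _ _).trans (Finset.sup_le fun k hk => ?_)
  rw [MvPolynomial.aeval_monomial]
  refine (MvPolynomial.totalDegree_mul _ _).trans ?_
  have h1 : (algebraMap ℝ (MvPolynomial (Fin d) ℝ) (MvPolynomial.coeff k p)).totalDegree = 0 := by
    rw [MvPolynomial.algebraMap_eq, MvPolynomial.totalDegree_C]
  rw [h1, zero_add]
  have h2 : (k.prod fun i e => g i ^ e).totalDegree ≤ ∑ i ∈ k.support, k i := by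
    rw [Finsupp.prod]
    refine (MvPolynomial.totalDegree_finset_prod _ _).trans ?_
    refine Finset.sum_le_sum fun i _ => ?_
    calc (g i ^ k i).totalDegree ≤ k i * (g i).totalDegree :=
          MvPolynomial.totalDegree_pow _ _
      _ ≤ k i * 1 := Nat.mul_le_mul_left _ (hg i)
      _ = k i := mul_one _
  refine h2.trans ?_
  have := MvPolynomial.le_totalDegree hk
  simpa [Finsupp.sum] using this

/-- A polynomial vanishing on the unit ball vanishes. -/
lemma eq_zero_of_eval_ball (P : MvPolynomial (Fin d) ℝ)
    (h : ∀ y : EuclideanSpace ℝ (Fin d), y ∈ ball (0 : EuclideanSpace ℝ (Fin d)) 1 →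
      MvPolynomial.eval (fun i => y i) P = 0) : P = 0 := by
  apply MvPolynomial.funext
  intro z
  simp only [map_zero]
  set zE : EuclideanSpace ℝ (Fin d) := (EuclideanSpace.equiv (Fin d) ℝ).symm z with hzE
  have hcoord : ∀ i, zE i = z i := fun i => rfl
  set ε : ℝ := (‖zE‖ + 1)⁻¹ with hε
  have hεpos : 0 < ε := inv_pos.mpr (by positivity)
  set q : Polynomial ℝ :=
    MvPolynomial.aeval (fun i => Polynomial.C (z i) * Polynomial.X) P with hq
  have hqe : ∀ t : ℝ, q.eval t = MvPolynomial.eval (fun i => z i * t) P := by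
    intro t
    rw [hq, eval_aeval_poly]
    simp
  have hroots : Set.Ioo (-ε) ε ⊆ {t : ℝ | q.IsRoot t} := by
    intro t ht
    have htlt : |t| < ε := abs_lt.mpr ⟨ht.1, ht.2⟩
    have hmem : t • zE ∈ ball (0 : EuclideanSpace ℝ (Fin d)) 1 := by
      rw [mem_ball_zero_iff, norm_smul]
      calc ‖t‖ * ‖zE‖ ≤ ‖t‖ * (‖zE‖ + 1) := by
            exact mul_le_mul_of_nonneg_left (by linarith) (norm_nonneg _)
        _ < ε * (‖zE‖ + 1) := by
            apply mul_lt_mul_of_pos_right _ (by positivity)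
            simpa [Real.norm_eq_abs] using htlt
        _ = 1 := by
            rw [hε]
            field_simp
    have := h (t • zE) hmem
    have hco : (fun i => (t • zE) i) = fun i => z i * t := by
      funext i
      show t * zE i = z i * t
      rw [hcoord i, mul_comm]
    rw [hco] at this
    show q.eval t = 0
    rw [hqe t, this]
  have hq0 : q = 0 := by
    apply Polynomial.eq_zero_of_infinite_isRoot
    exact Set.Infinite.mono hroots (Set.Ioo_infinite (by linarith))
  have := hqe 1
  rw [hq0] at this
  simpa using this.symm

lemma integrableOn_ball' (g : EuclideanSpace ℝ (Fin d) → ℝ) (hg : Continuous g)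
    (c : EuclideanSpace ℝ (Fin d)) (ρ : ℝ) : IntegrableOn g (ball c ρ) volume :=
  (hg.locallyIntegrable.integrableOn_isCompact (isCompact_closedBall c ρ)).mono_set
    ball_subset_closedBall

lemma continuous_evalE (P : MvPolynomial (Fin d) ℝ) :
    Continuous fun y : EuclideanSpace ℝ (Fin d) => MvPolynomial.eval (fun i => y i) P := by
  have h1 : Continuous fun y : EuclideanSpace ℝ (Fin d) => (fun i => y i : Fin d → ℝ) :=
    continuous_pi fun i => PiLp.continuous_apply 2 _ i
  exact (MvPolynomial.continuous_eval (p := P)).comp h1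

set_option maxHeartbeats 1000000 in
/-- The core doubling inequality on balls centered at the origin with radii 1 and 2. -/
lemma core (d D : ℕ) : ∃ C : ℝ, 0 < C ∧ ∀ W : MvPolynomial (Fin d) ℝ, W.totalDegree ≤ D →
    (∀ y : Fin d → ℝ, 0 ≤ MvPolynomial.eval y W) →
    (∫ y in ball (0 : EuclideanSpace ℝ (Fin d)) 2, MvPolynomial.eval (fun i => y i) W) ≤
      C * ∫ y in ball (0 : EuclideanSpace ℝ (Fin d)) 1, MvPolynomial.eval (fun i => y i) W := by
  classical
  set E := EuclideanSpace ℝ (Fin d)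
  set S := MvPolynomial.restrictTotalDegree (Fin d) ℝ D with hS
  haveI : Module.Free ℝ S := Module.Free.of_divisionRing ℝ S
  set n := Module.finrank ℝ S with hn
  set b : Module.Basis (Fin n) ℝ S := Module.finBasis ℝ S with hb
  set F := (Fin n → ℝ)
  -- the basis polynomials as functions
  set g : Fin n → E → ℝ :=
    fun j y => MvPolynomial.eval (fun i => y i) ((b j : MvPolynomial (Fin d) ℝ)) with hg
  have hgc : ∀ j, Continuous (g j) := fun j => continuous_evalE _
  set f : F → E → ℝ := fun v y => ∑ j, v j * g j y with hf
  have hfc : ∀ v, Continuous (f v) := fun v =>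
    continuous_finset_sum _ fun j _ => continuous_const.mul (hgc j)
  have hfeval : ∀ (P : S) (y : E),
      f (b.equivFun P) y = MvPolynomial.eval (fun i => y i) (P : MvPolynomial (Fin d) ℝ) := by
    intro P y
    have hsum : (P : MvPolynomial (Fin d) ℝ) =
        ∑ j, b.equivFun P j • ((b j : MvPolynomial (Fin d) ℝ)) := by
      conv_lhs => rw [← b.sum_equivFun P]
      push_cast
      rfl
    conv_rhs => rw [hsum]
    rw [map_sum]
    simp [hf, hg, MvPolynomial.smul_eval]
  -- integrability
  have hint : ∀ (v : F) (ρ : ℝ), IntegrableOn (fun y => |f v y|) (ball (0:E) ρ) volume :=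
    fun v ρ => integrableOn_ball' _ (hfc v).abs _ _
  have hint' : ∀ (v : F) (ρ : ℝ), IntegrableOn (f v) (ball (0:E) ρ) volume :=
    fun v ρ => integrableOn_ball' _ (hfc v) _ _
  set N : F → ℝ := fun v => ∫ y in ball (0:E) 1, |f v y| with hN
  set K1 : ℝ := ∑ j, ∫ y in ball (0:E) 1, |g j y| with hK1
  set K2 : ℝ := ∑ j, ∫ y in ball (0:E) 2, |g j y| with hK2
  have hgint : ∀ (j : Fin n) (ρ : ℝ), IntegrableOn (fun y => |g j y|) (ball (0:E) ρ) volume :=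
    fun j ρ => integrableOn_ball' _ (hgc j).abs _ _
  have hKnonneg : ∀ (j : Fin n) (ρ : ℝ), 0 ≤ ∫ y in ball (0:E) ρ, |g j y| :=
    fun j ρ => integral_nonneg fun y => abs_nonneg _
  -- upper bound for the integral of |f v| over a ball of radius ρ
  have hbound : ∀ (v : F) (ρ : ℝ),
      (∫ y in ball (0:E) ρ, |f v y|) ≤ (∑ j, ∫ y in ball (0:E) ρ, |g j y|) * ‖v‖ := by
    intro v ρ
    have step1 : (∫ y in ball (0:E) ρ, |f v y|) ≤
        ∫ y in ball (0:E) ρ, ∑ j, ‖v‖ * |g j y| := by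
      refine setIntegral_mono_on (hint v ρ) ?_ measurableSet_ball ?_
      · exact integrable_finset_sum _ fun j _ => (hgint j ρ).const_mul _
      · intro y _
        calc |f v y| ≤ ∑ j, |v j * g j y| := Finset.abs_sum_le_sum_abs _ _
          _ ≤ ∑ j, ‖v‖ * |g j y| := by
              refine Finset.sum_le_sum fun j _ => ?_
              rw [abs_mul]
              exact mul_le_mul_of_nonneg_right
                ((Real.norm_eq_abs (v j) ▸ norm_le_pi_norm v j)) (abs_nonneg _)
    calc (∫ y in ball (0:E) ρ, |f v y|) ≤ ∫ y in ball (0:E) ρ, ∑ j, ‖v‖ * |g j y| := step1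
      _ = ∑ j, ‖v‖ * ∫ y in ball (0:E) ρ, |g j y| := by
          rw [integral_finset_sum _ fun j _ => (hgint j ρ).const_mul _]
          exact Finset.sum_congr rfl fun j _ => integral_const_mul _ _
      _ = (∑ j, ∫ y in ball (0:E) ρ, |g j y|) * ‖v‖ := by
          rw [Finset.sum_mul]
          exact Finset.sum_congr rfl fun j _ => mul_comm _ _
  -- N is Lipschitz hence continuous
  have hflin : ∀ v w : F, ∀ y, f v y - f w y = f (v - w) y := by
    intro v w y
    show (∑ j, v j * g j y) - (∑ j, w j * g j y) = ∑ j, (v - w) j * g j y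
    rw [← Finset.sum_sub_distrib]
    exact Finset.sum_congr rfl fun j _ => by rw [Pi.sub_apply, sub_mul]
  have hNlip : ∀ v w : F, |N v - N w| ≤ K1 * ‖v - w‖ := by
    intro v w
    have h1 : N v - N w = ∫ y in ball (0:E) 1, (|f v y| - |f w y|) :=
      (integral_sub (hint v 1) (hint w 1)).symm
    calc |N v - N w| = |∫ y in ball (0:E) 1, (|f v y| - |f w y|)| := by rw [h1]
      _ ≤ ∫ y in ball (0:E) 1, |(|f v y| - |f w y|)| := by
          simpa [Real.norm_eq_abs] using
            norm_integral_le_integral_norm (μ := volume.restrict (ball (0:E) 1))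
              (f := fun y => |f v y| - |f w y|)
      _ ≤ ∫ y in ball (0:E) 1, |f (v - w) y| := by
          refine setIntegral_mono_on ((hint v 1).sub (hint w 1)).abs (hint (v - w) 1)
            measurableSet_ball ?_
          intro y _
          rw [← hflin v w y]
          exact abs_abs_sub_abs_le_abs_sub _ _
      _ ≤ K1 * ‖v - w‖ := hbound (v - w) 1
  have hNcont : Continuous N := by
    refine (LipschitzWith.of_dist_le_mul (K := K1.toNNReal) fun v w => ?_).continuous
    rw [Real.dist_eq, dist_eq_norm]
    refine (hNlip v w).trans ?_
    exact mul_le_mul_of_nonneg_right (Real.le_coe_toNNReal K1) (norm_nonneg _)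
  -- N is positive on nonzero vectors
  have hNpos : ∀ v : F, v ≠ 0 → 0 < N v := by
    intro v hv
    set P : S := b.equivFun.symm v with hP
    have hvP : b.equivFun P = v := b.equivFun.apply_symm_apply v
    have hPne : (P : MvPolynomial (Fin d) ℝ) ≠ 0 := by
      intro h0
      apply hv
      rw [← hvP]
      have : P = 0 := Subtype.ext h0
      rw [this, map_zero]
    have hfv : ∀ y : E, f v y = MvPolynomial.eval (fun i => y i) (P : MvPolynomial (Fin d) ℝ) :=
      fun y => by rw [← hvP, hfeval]
    obtain ⟨y₀, hy₀b, hy₀⟩ : ∃ y₀ ∈ ball (0:E) 1,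
        MvPolynomial.eval (fun i => y₀ i) (P : MvPolynomial (Fin d) ℝ) ≠ 0 := by
      by_contra hcon
      push_neg at hcon
      exact hPne (eq_zero_of_eval_ball _ hcon)
    rw [hN]
    rw [setIntegral_pos_iff_support_of_nonneg_ae
      (Eventually.of_forall fun y => abs_nonneg _) (hint v 1)]
    have hopen : IsOpen ((f v) ⁻¹' {(0:ℝ)}ᶜ) := (isOpen_compl_singleton).preimage (hfc v)
    have hsub : (f v) ⁻¹' {(0:ℝ)}ᶜ ∩ ball (0:E) 1 ⊆
        Function.support (fun y => |f v y|) ∩ ball (0:E) 1 := by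
      intro y hy
      exact ⟨fun h => hy.1 (abs_eq_zero.mp h), hy.2⟩
    refine lt_of_lt_of_le ?_ (measure_mono hsub)
    refine (hopen.inter isOpen_ball).measure_pos volume ⟨y₀, ?_, hy₀b⟩
    simp only [Set.mem_preimage, Set.mem_compl_iff, Set.mem_singleton_iff]
    rw [hfv y₀]
    exact hy₀
  -- minimum of N on the unit sphere
  have hone : (1 : MvPolynomial (Fin d) ℝ) ∈ S := by
    rw [hS, MvPolynomial.mem_restrictTotalDegree]
    simp
  haveI : Nontrivial S := ⟨⟨⟨1, hone⟩, 0, by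
    intro h
    have := congrArg (Subtype.val) h
    simpa using this⟩⟩
  haveI : Nontrivial F := b.equivFun.toEquiv.symm.nontrivial
  have hsph : (sphere (0:F) 1).Nonempty := NormedSpace.sphere_nonempty.mpr zero_le_one
  obtain ⟨u, hu, hmin⟩ := (isCompact_sphere (0:F) 1).exists_isMinOn hsph hNcont.continuousOn
  set m : ℝ := N u with hm
  have hune : u ≠ 0 := by
    intro h
    rw [mem_sphere_zero_iff_norm, h] at hu
    simp at hu
  have hmpos : 0 < m := hNpos u hune
  have hNsmul : ∀ (c : ℝ) (v : F), N (c • v) = |c| * N v := by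
    intro c v
    have : ∀ y : E, f (c • v) y = c * f v y := by
      intro y
      show (∑ j, (c • v) j * g j y) = c * ∑ j, v j * g j y
      rw [Finset.mul_sum]
      exact Finset.sum_congr rfl fun j _ => by rw [Pi.smul_apply, smul_eq_mul, mul_assoc]
    rw [hN]
    simp only [this, abs_mul]
    exact integral_const_mul _ _
  have hkey : ∀ v : F, m * ‖v‖ ≤ N v := by
    intro v
    rcases eq_or_ne v 0 with rfl | hv
    · simp only [norm_zero, mul_zero]
      have h0 : N (0 : F) = 0 := by
        have := hNsmul 0 0
        simpa using this
      rw [h0]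
    · have hnv : (0:ℝ) < ‖v‖ := norm_pos_iff.mpr hv
      set u' : F := ‖v‖⁻¹ • v with hu'
      have hu'mem : u' ∈ sphere (0:F) 1 := by
        rw [mem_sphere_zero_iff_norm, hu', norm_smul, norm_inv, norm_norm,
          inv_mul_cancel₀ hnv.ne']
      have h1 : v = ‖v‖ • u' := by
        rw [hu', smul_smul, mul_inv_cancel₀ hnv.ne', one_smul]
      have h2 : N v = ‖v‖ * N u' := by
        have h3 := hNsmul ‖v‖ u'
        rw [← h1, abs_norm] at h3
        exact h3
      calc m * ‖v‖ ≤ N u' * ‖v‖ :=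
            mul_le_mul_of_nonneg_right (hmin hu'mem) hnv.le
        _ = N v := by rw [h2]; ring
  -- conclusion
  refine ⟨K2 / m + 1, by positivity, ?_⟩
  intro W hdeg hW0
  set P : S := ⟨W, (MvPolynomial.mem_restrictTotalDegree _ _ _).mpr hdeg⟩ with hPdef
  set v : F := b.equivFun P with hv
  have hfeq : ∀ y : E, f v y = MvPolynomial.eval (fun i => y i) W := fun y => hfeval P y
  have hNv : N v = ∫ y in ball (0:E) 1, MvPolynomial.eval (fun i => y i) W := by
    rw [hN]
    refine setIntegral_congr_fun measurableSet_ball fun y _ => ?_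
    rw [hfeq y, abs_of_nonneg (hW0 _)]
  have hNvnonneg : 0 ≤ N v := integral_nonneg fun y => abs_nonneg _
  have lhs_le : (∫ y in ball (0:E) 2, MvPolynomial.eval (fun i => y i) W) ≤ K2 * ‖v‖ := by
    calc (∫ y in ball (0:E) 2, MvPolynomial.eval (fun i => y i) W)
        = ∫ y in ball (0:E) 2, f v y := by
          exact (setIntegral_congr_fun measurableSet_ball fun y _ => (hfeq y).symm)
      _ ≤ ∫ y in ball (0:E) 2, |f v y| := by
          refine setIntegral_mono_on (hint' v 2) (hint v 2) measurableSet_ball ?_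
          intro y _
          exact le_abs_self _
      _ ≤ K2 * ‖v‖ := hbound v 2
  have hvle : ‖v‖ ≤ N v / m := by
    rw [le_div_iff₀ hmpos]
    calc ‖v‖ * m = m * ‖v‖ := mul_comm _ _
      _ ≤ N v := hkey v
  calc (∫ y in ball (0:E) 2, MvPolynomial.eval (fun i => y i) W) ≤ K2 * ‖v‖ := lhs_le
    _ ≤ K2 * (N v / m) := by
        refine mul_le_mul_of_nonneg_left hvle ?_
        rw [hK2]
        exact Finset.sum_nonneg fun j _ => hKnonneg j 2
    _ = (K2 / m) * N v := by ring
    _ ≤ (K2 / m + 1) * N v := by nlinarith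
    _ = (K2 / m + 1) * ∫ y in ball (0:E) 1, MvPolynomial.eval (fun i => y i) W := by rw [hNv]

end PolyDoublingAux

/-- Nonnegative polynomials of degree at most `D` on `ℝ^d` satisfy a doubling condition
`∫_{B(x,2r)} V ≤ C ∫_{B(x,r)} V` with a constant depending only on `d` and `D`. -/
theorem polynomial_doubling
    (d D : ℕ) (hd : 1 ≤ d) :
    ∃ C : ℝ, 0 < C ∧
      ∀ V : MvPolynomial (Fin d) ℝ, V.totalDegree ≤ D →
        (∀ y : Fin d → ℝ, 0 ≤ MvPolynomial.eval y V) →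
        ∀ (x : EuclideanSpace ℝ (Fin d)) (r : ℝ), 0 < r →
          (∫ y in ball x (2*r), MvPolynomial.eval (fun i => y i) V) ≤
            C * ∫ y in ball x r, MvPolynomial.eval (fun i => y i) V := by
  classical
  obtain ⟨C, hC, hcore⟩ := PolyDoublingAux.core d D
  refine ⟨C, hC, ?_⟩
  intro V hdeg hpos x r hr
  set g : EuclideanSpace ℝ (Fin d) → ℝ := fun y => MvPolynomial.eval (fun i => y i) V with hgdef
  set W : MvPolynomial (Fin d) ℝ :=
    MvPolynomial.aeval
      (fun i => MvPolynomial.C (x i) + MvPolynomial.C r * MvPolynomial.X i) V with hW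
  have hWdeg : W.totalDegree ≤ D := by
    refine le_trans (PolyDoublingAux.totalDegree_aeval_le _ ?_ V) hdeg
    intro i
    refine (MvPolynomial.totalDegree_add _ _).trans (max_le (by simp) ?_)
    refine (MvPolynomial.totalDegree_mul _ _).trans ?_
    simp [MvPolynomial.totalDegree_X]
  have hWeval : ∀ z : Fin d → ℝ,
      MvPolynomial.eval z W = MvPolynomial.eval (fun i => x i + r * z i) V := by
    intro z
    rw [hW, PolyDoublingAux.eval_aeval_mv]
    simp
  have hW0 : ∀ z : Fin d → ℝ, 0 ≤ MvPolynomial.eval z W := by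
    intro z
    rw [hWeval z]
    exact hpos _
  -- change of variables
  have hchange : ∀ k : ℝ, 0 < k →
      (∫ y in ball x (k * r), g y) =
        r ^ d * ∫ z in ball (0:EuclideanSpace ℝ (Fin d)) k, MvPolynomial.eval (fun i => z i) W := by
    intro k hk
    -- translation
    have htrans : (∫ y in ball x (k * r), g y) = ∫ z in ball (0:EuclideanSpace ℝ (Fin d)) (k * r), g (x + z) := by
      have hmp : MeasurePreserving (fun z : EuclideanSpace ℝ (Fin d) => x + z) volume volume :=
        measurePreserving_add_left volume x
      have hemb : MeasurableEmbedding (fun z : EuclideanSpace ℝ (Fin d) => x + z) :=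
        (MeasurableEquiv.addLeft x).measurableEmbedding
      have hpre : (fun z : EuclideanSpace ℝ (Fin d) => x + z) ⁻¹' ball x (k * r) = ball (0:EuclideanSpace ℝ (Fin d)) (k * r) := by
        ext z
        simp [mem_ball, dist_eq_norm, add_sub_cancel_left]
      rw [← hpre, hmp.setIntegral_preimage_emb hemb]
    -- scaling
    have hsmul : r • ball (0:EuclideanSpace ℝ (Fin d)) k = ball (0:EuclideanSpace ℝ (Fin d)) (k * r) := by
      rw [_root_.smul_ball hr.ne' (0:EuclideanSpace ℝ (Fin d)) k, smul_zero, Real.norm_eq_abs, abs_of_pos hr, mul_comm]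
    have hscale : (∫ z in ball (0:EuclideanSpace ℝ (Fin d)) k, g (x + r • z)) =
        (r ^ d)⁻¹ • ∫ z in ball (0:EuclideanSpace ℝ (Fin d)) (k * r), g (x + z) := by
      have := MeasureTheory.Measure.setIntegral_comp_smul_of_pos (μ := (volume : Measure (EuclideanSpace ℝ (Fin d))))
        (f := fun z => g (x + z)) (ball (0:EuclideanSpace ℝ (Fin d)) k) hr
      rw [this, hsmul, finrank_euclideanSpace_fin]
    have hcoord : ∀ z : EuclideanSpace ℝ (Fin d), g (x + r • z) = MvPolynomial.eval (fun i => z i) W := by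
      intro z
      rw [hWeval, hgdef]
      rfl
    have hrd : (0:ℝ) < r ^ d := pow_pos hr d
    rw [htrans]
    have : (∫ z in ball (0:EuclideanSpace ℝ (Fin d)) k, MvPolynomial.eval (fun i => z i) W)
        = (r ^ d)⁻¹ * ∫ z in ball (0:EuclideanSpace ℝ (Fin d)) (k * r), g (x + z) := by
      rw [← smul_eq_mul, ← hscale]
      exact setIntegral_congr_fun measurableSet_ball fun z _ => (hcoord z).symm
    rw [this]
    field_simp
  have h2 : (∫ y in ball x (2 * r), g y) =
      r ^ d * ∫ z in ball (0:EuclideanSpace ℝ (Fin d)) 2, MvPolynomial.eval (fun i => z i) W := hchange 2 two_pos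
  have h1 : (∫ y in ball x r, g y) =
      r ^ d * ∫ z in ball (0:EuclideanSpace ℝ (Fin d)) 1, MvPolynomial.eval (fun i => z i) W := by
    have := hchange 1 one_pos
    rwa [one_mul] at this
  rw [show (∫ y in ball x (2*r), MvPolynomial.eval (fun i => y i) V) = ∫ y in ball x (2*r), g y
    from rfl, show (∫ y in ball x r, MvPolynomial.eval (fun i => y i) V) = ∫ y in ball x r, g y
    from rfl, h2, h1]
  have hcoreW := hcore W hWdeg hW0
  have hrd : (0:ℝ) ≤ r ^ d := (pow_pos hr d).le
  calc r ^ d * ∫ z in ball (0:EuclideanSpace ℝ (Fin d)) 2, MvPolynomial.eval (fun i => z i) W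
      ≤ r ^ d * (C * ∫ z in ball (0:EuclideanSpace ℝ (Fin d)) 1, MvPolynomial.eval (fun i => z i) W) :=
        mul_le_mul_of_nonneg_left hcoreW hrd
    _ = C * (r ^ d * ∫ z in ball (0:EuclideanSpace ℝ (Fin d)) 1, MvPolynomial.eval (fun i => z i) W) := by ring
end

section
/- Let V ≥ 0 be a polynomial on ℝ^d, let M(x,V) = Σ_α |∂^α V(x)|^{1/(|α|+2)} (finite sum over multi-indices), and let m(x,V) be defined by 1/m(x,V) = sup{r > 0 : r^{2−d} ∫_{B(x,r)} V ≤ 1}. Then there exist constants c, C > 0 depending only on d and deg V such that c M(x,V) ≤ m(x,V) ≤ C M(x,V) for all x ∈ ℝ^d. -/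
open MeasureTheory Metric Filter
open scoped ENNReal

/-- Iterated partial derivative `∂^α V` of a multivariate polynomial. -/
noncomputable def pd {d : ℕ} (α : Fin d → ℕ) (V : MvPolynomial (Fin d) ℝ) :
    MvPolynomial (Fin d) ℝ :=
  (((List.finRange d).map (fun i =>
    ((MvPolynomial.pderiv i).toLinearMap ^ (α i) :
      Module.End ℝ (MvPolynomial (Fin d) ℝ)))).prod) V

/-- The Smith–Zhong maximal function `M(x,V) = Σ_α |∂^α V(x)|^{1/(|α|+2)}`, where the sum
runs over multi-indices `α` with `α i ≤ D` (this covers all nonzero terms when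
`deg V ≤ D`). -/
noncomputable def Mfun {d : ℕ} (D : ℕ) (V : MvPolynomial (Fin d) ℝ)
    (x : EuclideanSpace ℝ (Fin d)) : ℝ :=
  ∑ α : Fin d → Fin (D+1),
    |MvPolynomial.eval (fun i => x i) (pd (fun i => (α i : ℕ)) V)| ^
      ((1:ℝ) / ((∑ i, ((α i : ℕ) : ℝ)) + 2))

namespace SZ
open MvPolynomial

variable {d : ℕ}

noncomputable def fsp (α : Fin d → ℕ) : Fin d →₀ ℕ := Finsupp.equivFunOnFinite.symm α

@[simp] lemma fsp_apply (α : Fin d → ℕ) (i : Fin d) : fsp α i = α i := rfl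

lemma pderiv_pow_monomial (i : Fin d) (k : ℕ) (u : Fin d →₀ ℕ) (c : ℝ) :
    (((MvPolynomial.pderiv i).toLinearMap ^ k :
        Module.End ℝ (MvPolynomial (Fin d) ℝ)))
      (MvPolynomial.monomial u c)
      = MvPolynomial.monomial (u - Finsupp.single i k) (c * (u i).descFactorial k) := by
  induction k with
  | zero => simp
  | succ k ih =>
      rw [pow_succ', Module.End.mul_apply, ih]
      have : ((MvPolynomial.pderiv i).toLinearMap :
          Module.End ℝ (MvPolynomial (Fin d) ℝ))
          (MvPolynomial.monomial (u - Finsupp.single i k) (c * (u i).descFactorial k))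
          = MvPolynomial.pderiv i
            (MvPolynomial.monomial (u - Finsupp.single i k) (c * (u i).descFactorial k)) := rfl
      rw [this, pderiv_monomial]
      congr 1
      · rw [tsub_tsub, ← Finsupp.single_add]
      · rw [Finsupp.tsub_apply, Finsupp.single_eq_same, Nat.descFactorial_succ]
        push_cast
        ring

lemma list_single_apply_eq_zero (α : Fin d → ℕ) (i : Fin d) :
    ∀ (l : List (Fin d)), i ∉ l →
      ((l.map fun j => Finsupp.single j (α j)).sum) i = 0 := by
  intro l
  induction l with
  | nil => simp
  | cons a l ih =>
      intro hi
      simp only [List.map_cons, List.sum_cons, Finsupp.add_apply]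
      simp only [List.mem_cons, not_or] at hi
      rw [Finsupp.single_apply, if_neg (fun hh => hi.1 hh.symm), ih hi.2]

lemma pd_list_monomial (α : Fin d → ℕ) (u : Fin d →₀ ℕ) (c : ℝ) :
    ∀ (l : List (Fin d)), l.Nodup →
    ((l.map fun i => ((MvPolynomial.pderiv i).toLinearMap ^ (α i) :
        Module.End ℝ (MvPolynomial (Fin d) ℝ))).prod) (MvPolynomial.monomial u c)
      = MvPolynomial.monomial (u - (l.map fun i => Finsupp.single i (α i)).sum)
          (c * (l.map fun i => (((u i).descFactorial (α i) : ℝ))).prod) := by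
  intro l
  induction l with
  | nil => simp
  | cons a l ih =>
      intro hnd
      have hal : a ∉ l := (List.nodup_cons.mp hnd).1
      simp only [List.map_cons, List.prod_cons, Module.End.mul_apply, List.sum_cons]
      rw [ih (List.nodup_cons.mp hnd).2, pderiv_pow_monomial]
      congr 1
      · rw [tsub_tsub, add_comm ((List.map (fun i => Finsupp.single i (α i)) l).sum)]
      · rw [Finsupp.tsub_apply, list_single_apply_eq_zero α a l hal, Nat.sub_zero]
        ring

lemma sum_single_finRange (α : Fin d → ℕ) :
    ((List.finRange d).map fun i => Finsupp.single i (α i)).sum = fsp α := by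
  ext j
  rw [← Fin.sum_univ_def (fun i => Finsupp.single i (α i))]
  rw [Finsupp.finset_sum_apply]
  simp [Finsupp.single_apply, Finset.sum_ite_eq]

lemma pd_monomial (α : Fin d → ℕ) (u : Fin d →₀ ℕ) (c : ℝ) :
    pd α (MvPolynomial.monomial u c)
      = MvPolynomial.monomial (u - fsp α) (c * ∏ i, (((u i).descFactorial (α i) : ℝ))) := by
  unfold pd
  rw [pd_list_monomial α u c (List.finRange d) (List.nodup_finRange d),
    sum_single_finRange, ← Fin.prod_univ_def]

lemma pd_add (α : Fin d → ℕ) (p q : MvPolynomial (Fin d) ℝ) :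
    pd α (p + q) = pd α p + pd α q := by
  unfold pd; exact map_add _ _ _

lemma eval_zero_pd (α : Fin d → ℕ) (q : MvPolynomial (Fin d) ℝ) :
    MvPolynomial.eval (0 : Fin d → ℝ) (pd α q)
      = (∏ i, (((α i).factorial : ℝ))) * MvPolynomial.coeff (fsp α) q := by
  induction q using MvPolynomial.induction_on' with
  | add p q hp hq =>
      rw [pd_add, map_add, hp, hq, coeff_add]
      ring
  | monomial u c =>
      rw [pd_monomial, coeff_monomial]
      rw [show MvPolynomial.eval (0 : Fin d → ℝ) = (constantCoeff : MvPolynomial (Fin d) ℝ →+* ℝ)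
        from eval_zero]
      classical
      rw [constantCoeff_monomial]
      by_cases h : u = fsp α
      · have h0 : u - fsp α = 0 := by rw [h]; exact tsub_self _
        rw [if_pos h0, if_pos h]
        have hdf : ∀ i : Fin d, (u i).descFactorial (α i) = (α i).factorial := by
          intro i
          rw [show u i = α i by rw [h]; rfl, Nat.descFactorial_self]
        rw [Finset.prod_congr rfl fun i _ => by rw [hdf i]]
        ring
      · rw [if_neg h]
        by_cases h0 : u - fsp α = 0
        · rw [if_pos h0]
          have hle : ∀ i, u i ≤ α i := by
            intro i
            have := congrArg (fun f => f i) h0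
            simpa [Finsupp.tsub_apply, Nat.sub_eq_zero_iff_le] using this
          have hlt : ∃ i, u i < α i := by
            by_contra hc
            push_neg at hc
            exact h (Finsupp.ext fun i => le_antisymm (hle i) (by simpa using hc i))
          obtain ⟨i, hi⟩ := hlt
          have hz : (((u i).descFactorial (α i) : ℝ)) = 0 := by
            rw [Nat.descFactorial_eq_zero_iff_lt.mpr hi]; simp
          rw [Finset.prod_eq_zero (Finset.mem_univ i) hz]
          ring
        · rw [if_neg h0]
          ring

noncomputable def sh (x : Fin d → ℝ) :
    MvPolynomial (Fin d) ℝ →ₐ[ℝ] MvPolynomial (Fin d) ℝ :=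
  aeval fun i => X i + C (x i)

lemma sh_pderiv (x : Fin d → ℝ) (i : Fin d) (q : MvPolynomial (Fin d) ℝ) :
    sh x (pderiv i q) = pderiv i (sh x q) := by
  induction q using MvPolynomial.induction_on with
  | C a => simp [sh, pderiv_C]
  | add p q hp hq => simp only [map_add, hp, hq]
  | mul_X p j hp =>
      have hx : sh x (X j) = X j + C (x j) := by simp [sh]
      rw [pderiv_mul, map_add, map_mul, map_mul, hp, map_mul, pderiv_mul, hx]
      rcases eq_or_ne j i with h | h
      · subst h
        rw [pderiv_X_self, map_one, map_add, pderiv_X_self, pderiv_C]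
        ring
      · rw [pderiv_X_of_ne h, map_zero, map_add, pderiv_X_of_ne h, pderiv_C]
        ring

lemma sh_pderiv_pow (x : Fin d → ℝ) (i : Fin d) (k : ℕ) (q : MvPolynomial (Fin d) ℝ) :
    sh x ((((pderiv i).toLinearMap ^ k :
      Module.End ℝ (MvPolynomial (Fin d) ℝ))) q)
      = (((pderiv i).toLinearMap ^ k : Module.End ℝ (MvPolynomial (Fin d) ℝ))) (sh x q) := by
  induction k generalizing q with
  | zero => simp
  | succ k ih =>
      rw [pow_succ, Module.End.mul_apply, Module.End.mul_apply]
      rw [show (((pderiv i).toLinearMap : Module.End ℝ (MvPolynomial (Fin d) ℝ))) q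
        = pderiv i q from rfl, ih (pderiv i q), sh_pderiv]
      rfl

lemma sh_pd (x : Fin d → ℝ) (α : Fin d → ℕ) (q : MvPolynomial (Fin d) ℝ) :
    sh x (pd α q) = pd α (sh x q) := by
  unfold pd
  induction (List.finRange d) generalizing q with
  | nil => simp
  | cons a l ih =>
      simp only [List.map_cons, List.prod_cons, Module.End.mul_apply]
      rw [sh_pderiv_pow, ih]

lemma eval_sh (x z : Fin d → ℝ) (q : MvPolynomial (Fin d) ℝ) :
    eval z (sh x q) = eval (fun i => z i + x i) q := by
  induction q using MvPolynomial.induction_on with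
  | C a => simp [sh]
  | add p q hp hq => simp only [map_add, hp, hq]
  | mul_X p j hp =>
      have hx : sh x (X j) = X j + C (x j) := by simp [sh]
      rw [map_mul, hx, map_mul, hp]
      simp

lemma eval_pd (x : Fin d → ℝ) (α : Fin d → ℕ) (V : MvPolynomial (Fin d) ℝ) :
    eval x (pd α V) = (∏ i, (((α i).factorial : ℝ))) * coeff (fsp α) (sh x V) := by
  have hfun : (fun i => (0 : Fin d → ℝ) i + x i) = x := by funext i; simp
  have h1 : eval x (pd α V) = eval (0 : Fin d → ℝ) (sh x (pd α V)) := by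
    rw [eval_sh, hfun]
  rw [h1, sh_pd, eval_zero_pd]

lemma totalDegree_sh (x : Fin d → ℝ) (V : MvPolynomial (Fin d) ℝ) :
    (sh x V).totalDegree ≤ V.totalDegree := by
  conv_lhs => rw [V.as_sum, map_sum]
  refine (totalDegree_finset_sum _ _).trans (Finset.sup_le fun v hv => ?_)
  have hmon : sh x (monomial v (coeff v V))
      = C (coeff v V) * v.prod fun i k => (X i + C (x i)) ^ k := by
    rw [show sh x (monomial v (coeff v V))
      = aeval (fun i => X i + C (x i)) (monomial v (coeff v V)) from rfl,
      aeval_monomial, algebraMap_eq]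
  rw [hmon]
  refine (totalDegree_mul _ _).trans ?_
  rw [totalDegree_C, zero_add]
  refine le_trans (totalDegree_finset_prod _ _) ?_
  have hterm : ∀ i ∈ v.support, ((X i + C (x i)) ^ v i).totalDegree ≤ v i := by
    intro i _
    refine (totalDegree_pow _ _).trans ?_
    have h1 : (X i + C (x i)).totalDegree ≤ 1 :=
      (totalDegree_add _ _).trans (by simp)
    calc v i * (X i + C (x i)).totalDegree ≤ v i * 1 := Nat.mul_le_mul_left _ h1
      _ = v i := mul_one _
  refine le_trans (Finset.sum_le_sum hterm) ?_
  have hvs : (∑ i ∈ v.support, v i) = v.sum fun _ e => e := rfl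
  rw [hvs]
  exact le_totalDegree hv

lemma sh_ne_zero (x : Fin d → ℝ) {V : MvPolynomial (Fin d) ℝ} (hV : V ≠ 0) :
    sh x V ≠ 0 := by
  intro h
  apply hV
  apply MvPolynomial.funext
  intro w
  have heq := eval_sh x (fun i => w i - x i) V
  rw [h] at heq
  simp only [map_zero] at heq
  have hfun : (fun i => w i - x i + x i) = w := by funext i; ring
  rw [hfun] at heq
  rw [map_zero, ← heq]

lemma support_sh_le {D : ℕ} {x : Fin d → ℝ} {V : MvPolynomial (Fin d) ℝ}
    (hdeg : V.totalDegree ≤ D) {u : Fin d →₀ ℕ} (hu : u ∈ (sh x V).support) (i : Fin d) :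
    u i ≤ D := by
  have h1 : u i ≤ u.sum fun _ e => e := by
    by_cases h : u i = 0
    · simp [h]
    · exact Finset.single_le_sum (f := fun j => u j) (fun j _ => Nat.zero_le _)
        (Finsupp.mem_support_iff.mpr h)
  exact h1.trans ((le_totalDegree hu).trans ((totalDegree_sh x V).trans hdeg))

noncomputable def emb (D : ℕ) (α : Fin d → Fin (D + 1)) : Fin d →₀ ℕ :=
  fsp fun i => (α i : ℕ)

@[simp] lemma emb_apply (D : ℕ) (α : Fin d → Fin (D + 1)) (i : Fin d) :
    emb D α i = (α i : ℕ) := rfl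

lemma emb_inj (D : ℕ) : Function.Injective (emb (d := d) D) := by
  intro α β h
  funext i
  have := congrArg (fun f => f i) h
  simpa [emb, Fin.ext_iff] using this

lemma eval_eq_sum_iota {D : ℕ} {W : MvPolynomial (Fin d) ℝ}
    (hW : ∀ u ∈ W.support, ∀ i : Fin d, u i ≤ D) (z : Fin d → ℝ) :
    eval z W = ∑ α : Fin d → Fin (D + 1),
      coeff (emb D α) W * ∏ i, z i ^ ((α i : ℕ)) := by
  classical
  rw [eval_eq' z W]
  have hsub : W.support ⊆ Finset.univ.image (emb (d := d) D) := by
    intro v hv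
    refine Finset.mem_image.mpr ⟨fun i => ⟨v i, Nat.lt_succ_of_le (hW v hv i)⟩,
      Finset.mem_univ _, ?_⟩
    ext i
    rfl
  rw [Finset.sum_subset hsub (fun v _ hvn => by
    rw [notMem_support_iff.mp hvn]; ring)]
  rw [Finset.sum_image (fun α _ β _ h => emb_inj D h)]
  rfl

open scoped Pointwise

noncomputable def Pfun (D : ℕ) (a : (Fin d → Fin (D + 1)) → ℝ) (y : Fin d → ℝ) : ℝ :=
  ∑ α : Fin d → Fin (D + 1), a α * ∏ i, y i ^ ((α i : ℕ))

lemma Pfun_contY (D : ℕ) (a : (Fin d → Fin (D + 1)) → ℝ) :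
    Continuous fun y : Fin d → ℝ => Pfun D a y := by
  refine continuous_finset_sum _ fun α _ => Continuous.mul continuous_const ?_
  exact continuous_finset_prod _ fun i _ => (continuous_apply i).pow _

lemma Pfun_contA (D : ℕ) (y : Fin d → ℝ) :
    Continuous fun a : (Fin d → Fin (D + 1)) → ℝ => Pfun D a y :=
  continuous_finset_sum _ fun α _ => (continuous_apply α).mul continuous_const

lemma Pfun_smul (D : ℕ) (c : ℝ) (a : (Fin d → Fin (D + 1)) → ℝ) (y : Fin d → ℝ) :
    Pfun D (c • a) y = c * Pfun D a y := by
  unfold Pfun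
  rw [Finset.mul_sum]
  refine Finset.sum_congr rfl fun α _ => ?_
  simp [mul_assoc]

lemma contE {f : (Fin d → ℝ) → ℝ} (hf : Continuous f) :
    Continuous fun z : EuclideanSpace ℝ (Fin d) => f fun i => z i :=
  hf.comp (continuous_pi fun i => (continuous_apply i).comp (PiLp.continuous_ofLp 2 (fun _ : Fin d => ℝ)))

lemma integrableOn_ball_cont {f : EuclideanSpace ℝ (Fin d) → ℝ} (hf : Continuous f)
    (x : EuclideanSpace ℝ (Fin d)) (r : ℝ) :
    IntegrableOn f (ball x r) volume :=
  (hf.continuousOn.integrableOn_compact (isCompact_closedBall x r)).mono_set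
    ball_subset_closedBall

lemma integral_ball_scale (g : EuclideanSpace ℝ (Fin d) → ℝ)
    (x : EuclideanSpace ℝ (Fin d)) {r : ℝ} (hr : 0 < r) :
    ∫ y in ball x r, g y
      = r ^ d * ∫ y in ball (0 : EuclideanSpace ℝ (Fin d)) 1, g (x + r • y) := by
  have h1 : ∫ y in ball x r, g y
      = ∫ y in ball (0 : EuclideanSpace ℝ (Fin d)) r, g (x + y) := by
    have hmp := measurePreserving_add_left (volume : Measure (EuclideanSpace ℝ (Fin d))) x
    have hme : MeasurableEmbedding fun y : EuclideanSpace ℝ (Fin d) => x + y :=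
      (MeasurableEquiv.addLeft x).measurableEmbedding
    have hpre : (fun y : EuclideanSpace ℝ (Fin d) => x + y) ⁻¹' ball x r = ball 0 r := by
      ext y
      simp [mem_ball, dist_eq_norm]
    rw [← hmp.setIntegral_preimage_emb hme g (ball x r), hpre]
  have h2 : ∫ y in ball (0 : EuclideanSpace ℝ (Fin d)) 1, g (x + r • y)
      = (r ^ d)⁻¹ * ∫ y in ball (0 : EuclideanSpace ℝ (Fin d)) r, g (x + y) := by
    simpa [smul_unitBall_of_pos hr, finrank_euclideanSpace_fin, smul_eq_mul] using
      MeasureTheory.Measure.setIntegral_comp_smul_of_pos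
        (volume : Measure (EuclideanSpace ℝ (Fin d))) (fun y => g (x + y))
        (ball (0 : EuclideanSpace ℝ (Fin d)) 1) hr
  rw [h1, h2, ← mul_assoc, mul_inv_cancel₀ (pow_ne_zero _ hr.ne'), one_mul]

lemma coord_abs_le_norm (z : EuclideanSpace ℝ (Fin d)) (i : Fin d) : |z i| ≤ ‖z‖ := by
  rw [EuclideanSpace.norm_eq]
  calc |z i| = Real.sqrt ((z i) ^ 2) := (Real.sqrt_sq_eq_abs _).symm
    _ ≤ Real.sqrt (∑ j, ‖z j‖ ^ 2) := by
        refine Real.sqrt_le_sqrt ?_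
        have : (z i) ^ 2 = ‖z i‖ ^ 2 := by rw [Real.norm_eq_abs, sq_abs]
        rw [this]
        exact Finset.single_le_sum (f := fun j => ‖z j‖ ^ 2)
          (fun j _ => sq_nonneg _) (Finset.mem_univ i)

lemma keyUp (D : ℕ) (a : (Fin d → Fin (D + 1)) → ℝ) :
    ∫ z in ball (0 : EuclideanSpace ℝ (Fin d)) 1, Pfun D a (fun i => z i)
      ≤ (volume (ball (0 : EuclideanSpace ℝ (Fin d)) 1)).toReal * ∑ α, |a α| := by
  have hb : ∀ z ∈ ball (0 : EuclideanSpace ℝ (Fin d)) 1,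
      ‖Pfun D a (fun i => z i)‖ ≤ ∑ α, |a α| := by
    intro z hz
    rw [Real.norm_eq_abs]
    refine (Finset.abs_sum_le_sum_abs _ _).trans (Finset.sum_le_sum fun α _ => ?_)
    rw [abs_mul]
    have h1 : |∏ i, z i ^ ((α i : ℕ))| ≤ 1 := by
      rw [Finset.abs_prod]
      refine Finset.prod_le_one (fun i _ => abs_nonneg _) fun i _ => ?_
      rw [abs_pow]
      refine pow_le_one₀ (abs_nonneg _) ?_
      exact (coord_abs_le_norm z i).trans (le_of_lt (mem_ball_zero_iff.mp hz))
    calc |a α| * |∏ i, z i ^ ((α i : ℕ))| ≤ |a α| * 1 :=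
          mul_le_mul_of_nonneg_left h1 (abs_nonneg _)
      _ = |a α| := mul_one _
  have hnorm := norm_setIntegral_le_of_norm_le_const (μ := volume)
    (s := ball (0 : EuclideanSpace ℝ (Fin d)) 1) measure_ball_lt_top hb
  rw [Real.norm_eq_abs] at hnorm
  calc ∫ z in ball (0 : EuclideanSpace ℝ (Fin d)) 1, Pfun D a (fun i => z i)
      ≤ |∫ z in ball (0 : EuclideanSpace ℝ (Fin d)) 1, Pfun D a (fun i => z i)| :=
        le_abs_self _
    _ ≤ (∑ α, |a α|) * (volume (ball (0 : EuclideanSpace ℝ (Fin d)) 1)).toReal := hnorm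
    _ = _ := mul_comm _ _

noncomputable def polyOf (D : ℕ) (a : (Fin d → Fin (D + 1)) → ℝ) :
    MvPolynomial (Fin d) ℝ :=
  ∑ α : Fin d → Fin (D + 1), monomial (emb D α) (a α)

lemma eval_polyOf (D : ℕ) (a : (Fin d → Fin (D + 1)) → ℝ) (y : Fin d → ℝ) :
    eval y (polyOf D a) = Pfun D a y := by
  rw [polyOf, map_sum]
  refine Finset.sum_congr rfl fun α _ => ?_
  rw [eval_monomial, Finsupp.prod_pow]
  rfl

lemma coeff_polyOf (D : ℕ) (a : (Fin d → Fin (D + 1)) → ℝ) (β : Fin d → Fin (D + 1)) :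
    coeff (emb D β) (polyOf D a) = a β := by
  classical
  rw [polyOf]
  rw [show coeff (emb D β) (∑ α : Fin d → Fin (D + 1), monomial (emb D α) (a α))
    = ∑ α : Fin d → Fin (D + 1), coeff (emb D β) (monomial (emb D α) (a α)) from
    map_sum (coeffAddMonoidHom (emb D β)) _ _]
  simp only [coeff_monomial, (emb_inj (d := d) D).eq_iff]
  rw [Finset.sum_ite_eq' Finset.univ β (fun α => a α)]
  simp

lemma vanish_poly {q : MvPolynomial (Fin d) ℝ}
    (h : ∀ y : Fin d → ℝ, (∑ i, (y i) ^ 2) < 1 → eval y q = 0) : q = 0 := by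
  apply MvPolynomial.funext
  intro w
  rw [map_zero]
  set s := ∑ i, (w i) ^ 2 with hs
  have hs0 : 0 ≤ s := Finset.sum_nonneg fun i _ => sq_nonneg _
  have hε : 0 < (1 + s)⁻¹ := inv_pos.2 (by linarith)
  set F : Polynomial ℝ :=
    MvPolynomial.aeval (fun i => Polynomial.C (w i) * Polynomial.X) q with hF
  have hFeval : ∀ t : ℝ, Polynomial.eval t F = eval (fun i => w i * t) q := by
    intro t
    have hcomp : (Polynomial.aeval t).comp
        (MvPolynomial.aeval fun i => Polynomial.C (w i) * Polynomial.X)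
        = (MvPolynomial.aeval fun i => w i * t :
            MvPolynomial (Fin d) ℝ →ₐ[ℝ] ℝ) := by
      apply MvPolynomial.algHom_ext
      intro i
      simp
    have h1 : Polynomial.eval t F
        = (Polynomial.aeval t).comp
            (MvPolynomial.aeval fun i => Polynomial.C (w i) * Polynomial.X) q := rfl
    rw [h1, hcomp]
    rfl
  have hroot : ∀ t ∈ Set.Ioo (0 : ℝ) (1 + s)⁻¹, Polynomial.IsRoot F t := by
    intro t ht
    rw [Polynomial.IsRoot, hFeval]
    apply h
    have hsum : ∑ i, (w i * t) ^ 2 = s * t ^ 2 := by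
      rw [hs, Finset.sum_mul]
      exact Finset.sum_congr rfl fun i _ => by ring
    rw [hsum]
    obtain ⟨ht1, ht2⟩ := ht
    have htle : t < 1 := lt_of_lt_of_le ht2 (by
      rw [inv_le_one_iff₀]
      right
      linarith)
    have hpos : (0:ℝ) < 1 + s := by linarith
    have h2 : t * (1 + s) < 1 := by
      calc t * (1 + s) < (1 + s)⁻¹ * (1 + s) := mul_lt_mul_of_pos_right ht2 hpos
        _ = 1 := inv_mul_cancel₀ hpos.ne' 
    nlinarith
  have hF0 : F = 0 :=
    Polynomial.eq_zero_of_infinite_isRoot F ((Set.Ioo_infinite hε).mono hroot)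
  have h1 := hFeval 1
  rw [hF0] at h1
  simp only [Polynomial.eval_zero] at h1
  have hfun : (fun i => w i * 1) = w := by funext i; ring
  rw [hfun] at h1
  exact h1.symm

lemma vanish (D : ℕ) {a : (Fin d → Fin (D + 1)) → ℝ}
    (h : ∀ z : EuclideanSpace ℝ (Fin d), z ∈ ball 0 1 → Pfun D a (fun i => z i) = 0) :
    a = 0 := by
  have hq : polyOf D a = 0 := by
    apply vanish_poly
    intro y hy
    rw [eval_polyOf]
    have hz : ((WithLp.equiv 2 (Fin d → ℝ)).symm y) ∈
        ball (0 : EuclideanSpace ℝ (Fin d)) 1 := by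
      rw [mem_ball_zero_iff, EuclideanSpace.norm_eq]
      have he : ∑ i, ‖((WithLp.equiv 2 (Fin d → ℝ)).symm y) i‖ ^ 2 = ∑ i, (y i) ^ 2 := by
        refine Finset.sum_congr rfl fun i _ => ?_
        rw [show ((WithLp.equiv 2 (Fin d → ℝ)).symm y) i = y i from rfl, Real.norm_eq_abs, sq_abs]
      rw [he]
      have := Real.sqrt_lt_sqrt (Finset.sum_nonneg fun i _ => sq_nonneg _) hy
      rwa [Real.sqrt_one] at this
    have h2 := h _ hz
    have h3 : (fun i => ((WithLp.equiv 2 (Fin d → ℝ)).symm y) i) = y := by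
      funext i
      rfl
    rwa [h3] at h2
  funext β
  have h4 := coeff_polyOf D a β
  rw [hq] at h4
  simp only [coeff_zero] at h4
  exact h4.symm

noncomputable def Jint (D : ℕ) (α : Fin d → Fin (D + 1)) : ℝ :=
  ∫ z in ball (0 : EuclideanSpace ℝ (Fin d)) 1, ∏ i, (z i) ^ ((α i : ℕ))

lemma Phi_formula (D : ℕ) (a : (Fin d → Fin (D + 1)) → ℝ) :
    ∫ z in ball (0 : EuclideanSpace ℝ (Fin d)) 1, Pfun D a (fun i => z i)
      = ∑ α, a α * Jint D α := by
  have hmono : ∀ α : Fin d → Fin (D + 1),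
      IntegrableOn (fun z : EuclideanSpace ℝ (Fin d) => a α * ∏ i, (z i) ^ ((α i : ℕ)))
        (ball (0 : EuclideanSpace ℝ (Fin d)) 1) volume := by
    intro α
    refine integrableOn_ball_cont (continuous_const.mul ?_) _ _
    exact continuous_finset_prod _ fun i _ => ((continuous_apply i).comp (PiLp.continuous_ofLp 2 (fun _ : Fin d => ℝ))).pow _
  simp only [Pfun]
  rw [integral_finset_sum _ fun α _ => hmono α]
  refine Finset.sum_congr rfl fun α _ => ?_
  rw [MeasureTheory.integral_const_mul]
  rfl

lemma sum_abs_continuous (D : ℕ) :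
    Continuous fun a : (Fin d → Fin (D + 1)) → ℝ => ∑ α, |a α| :=
  continuous_finset_sum _ fun α _ => (continuous_apply α).abs

lemma keyLow (D : ℕ) : ∃ CL : ℝ, 0 < CL ∧
    ∀ a : (Fin d → Fin (D + 1)) → ℝ, (∀ y : Fin d → ℝ, 0 ≤ Pfun D a y) →
      (∑ α, |a α|) ≤
        CL * ∫ z in ball (0 : EuclideanSpace ℝ (Fin d)) 1, Pfun D a (fun i => z i) := by
  classical
  set Φ : ((Fin d → Fin (D + 1)) → ℝ) → ℝ := fun a => ∑ α, a α * Jint D α with hΦ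
  have hΦint : ∀ a, ∫ z in ball (0 : EuclideanSpace ℝ (Fin d)) 1, Pfun D a (fun i => z i)
      = Φ a := Phi_formula D
  have hΦcont : Continuous Φ :=
    continuous_finset_sum _ fun α _ => (continuous_apply α).mul continuous_const
  have hΦnonneg : ∀ a, (∀ y, 0 ≤ Pfun D a y) → 0 ≤ Φ a := by
    intro a ha
    rw [← hΦint]
    exact setIntegral_nonneg measurableSet_ball fun z _ => ha _
  have hΦpos : ∀ a, (∀ y, 0 ≤ Pfun D a y) → a ≠ 0 → 0 < Φ a := by
    intro a ha h0
    rcases (hΦnonneg a ha).lt_or_eq with h | h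
    · exact h
    · exfalso
      apply h0
      apply vanish D
      intro z hz
      set f : EuclideanSpace ℝ (Fin d) → ℝ := fun z => Pfun D a (fun i => z i) with hf
      have hfc : Continuous f := contE (Pfun_contY D a)
      have hfi : IntegrableOn f (ball (0 : EuclideanSpace ℝ (Fin d)) 1) volume :=
        integrableOn_ball_cont hfc _ _
      have hps := setIntegral_pos_iff_support_of_nonneg_ae
        (Filter.Eventually.of_forall fun z => ha fun i => z i :
          (0 : EuclideanSpace ℝ (Fin d) → ℝ)
            ≤ᵐ[volume.restrict (ball (0 : EuclideanSpace ℝ (Fin d)) 1)] f) hfi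
      have hint0 : ∫ z in ball (0 : EuclideanSpace ℝ (Fin d)) 1, f z = 0 := by
        rw [hf]
        rw [hΦint]
        exact h.symm
      have hμ : volume (Function.support f ∩ ball (0 : EuclideanSpace ℝ (Fin d)) 1) = 0 := by
        by_contra hmu
        have hpos2 : 0 < volume (Function.support f ∩ ball (0 : EuclideanSpace ℝ (Fin d)) 1) :=
          pos_iff_ne_zero.mpr hmu
        rw [← hps] at hpos2
        rw [hint0] at hpos2
        exact lt_irrefl _ hpos2
      have hopen : IsOpen (Function.support f ∩ ball (0 : EuclideanSpace ℝ (Fin d)) 1) :=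
        hfc.isOpen_support.inter isOpen_ball
      have hempty := (hopen.measure_eq_zero_iff volume).mp hμ
      by_contra hfz
      have : z ∈ Function.support f ∩ ball (0 : EuclideanSpace ℝ (Fin d)) 1 :=
        ⟨Function.mem_support.mpr hfz, hz⟩
      rw [hempty] at this
      exact this
  set K := {a : (Fin d → Fin (D + 1)) → ℝ |
    (∑ α, |a α|) = 1 ∧ ∀ y : Fin d → ℝ, 0 ≤ Pfun D a y} with hK
  have hKclosed : IsClosed K := by
    have h1 : IsClosed {a : (Fin d → Fin (D + 1)) → ℝ | (∑ α, |a α|) = 1} :=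
      isClosed_eq (sum_abs_continuous D) continuous_const
    have h2 : IsClosed {a : (Fin d → Fin (D + 1)) → ℝ | ∀ y : Fin d → ℝ, 0 ≤ Pfun D a y} := by
      rw [Set.setOf_forall]
      exact isClosed_iInter fun y => isClosed_le continuous_const (Pfun_contA D y)
    rw [hK, Set.setOf_and]
    exact h1.inter h2
  have hKbdd : Bornology.IsBounded K := by
    refine (Metric.isBounded_closedBall
      (x := (0 : (Fin d → Fin (D + 1)) → ℝ)) (r := 1)).subset ?_
    intro a ha
    rw [mem_closedBall_zero_iff]
    refine (pi_norm_le_iff_of_nonneg zero_le_one).mpr fun α => ?_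
    rw [Real.norm_eq_abs]
    calc |a α| ≤ ∑ β, |a β| :=
          Finset.single_le_sum (f := fun β => |a β|) (fun β _ => abs_nonneg _)
            (Finset.mem_univ α)
      _ = 1 := ha.1
  have hKcomp : IsCompact K := Metric.isCompact_of_isClosed_isBounded hKclosed hKbdd
  have hnormK : ∀ a : (Fin d → Fin (D + 1)) → ℝ, (∀ y, 0 ≤ Pfun D a y) →
      0 < (∑ α, |a α|) → ((∑ α, |a α|)⁻¹ • a) ∈ K := by
    intro a ha hpos
    constructor
    · simp only [Pi.smul_apply, smul_eq_mul, abs_mul, abs_inv, abs_of_pos hpos]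
      rw [← Finset.mul_sum, inv_mul_cancel₀ hpos.ne']
    · intro y
      rw [Pfun_smul]
      exact mul_nonneg (inv_nonneg.2 hpos.le) (ha y)
  by_cases hne : K.Nonempty
  · obtain ⟨a₀, ha₀, hmin⟩ := hKcomp.exists_isMinOn hne hΦcont.continuousOn
    have ha₀0 : a₀ ≠ 0 := by
      intro h0
      have := ha₀.1
      rw [h0] at this
      simp at this
    have hm : 0 < Φ a₀ := hΦpos a₀ ha₀.2 ha₀0
    refine ⟨(Φ a₀)⁻¹, inv_pos.2 hm, ?_⟩
    intro a ha
    rw [hΦint]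
    have hsA0 : 0 ≤ ∑ α, |a α| := Finset.sum_nonneg fun α _ => abs_nonneg _
    rcases hsA0.lt_or_eq with hpos | hzero
    · have hbK := hnormK a ha hpos
      have hb1 : Φ ((∑ α, |a α|)⁻¹ • a) = (∑ α, |a α|)⁻¹ * Φ a := by
        simp only [hΦ, Pi.smul_apply, smul_eq_mul, Finset.mul_sum]
        exact Finset.sum_congr rfl fun α _ => by ring
      have hle : Φ a₀ ≤ (∑ α, |a α|)⁻¹ * Φ a := by
        have hmem := hmin hbK
        rw [Set.mem_setOf_eq] at hmem
        rwa [hb1] at hmem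
      have h5 : (∑ α, |a α|) * Φ a₀ ≤ Φ a := by
        have := mul_le_mul_of_nonneg_left hle hsA0
        rwa [← mul_assoc, mul_inv_cancel₀ hpos.ne', one_mul] at this
      calc (∑ α, |a α|) = (Φ a₀)⁻¹ * ((∑ α, |a α|) * Φ a₀) := by
            field_simp
        _ ≤ (Φ a₀)⁻¹ * Φ a := mul_le_mul_of_nonneg_left h5 (inv_nonneg.2 hm.le)
    · rw [← hzero]
      exact mul_nonneg (inv_nonneg.2 hm.le) (hΦnonneg a ha)
  · refine ⟨1, one_pos, ?_⟩
    intro a ha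
    have ha0 : a = 0 := by
      by_contra h0
      have hsA : 0 < ∑ α, |a α| := by
        have hex : ∃ α, a α ≠ 0 := by
          by_contra hc
          push_neg at hc
          exact h0 (funext hc)
        obtain ⟨α, hα⟩ := hex
        exact Finset.sum_pos' (fun β _ => abs_nonneg _)
          ⟨α, Finset.mem_univ α, abs_pos.2 hα⟩
      exact hne ⟨_, hnormK a ha hsA⟩
    rw [ha0]
    have hP0 : ∀ y : Fin d → ℝ, Pfun D (0 : (Fin d → Fin (D + 1)) → ℝ) y = 0 := by
      intro y
      simp [Pfun]
    simp only [Pi.zero_apply, abs_zero, Finset.sum_const_zero, hP0]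
    simp

end SZ

/-- For nonzero nonnegative polynomials `V` of degree at most `D`, the Fefferman–Phong–Shen
maximal function `m(·,V)`, defined by `1/m(x,V) = sup{r > 0 : r^{2−d} ∫_{B(x,r)} V ≤ 1}`,
is equivalent to `M(·,V)` with constants depending only on `d` and `D`. -/
theorem m_equiv_M_for_polynomials
    (d D : ℕ) (hd : 1 ≤ d) :
    ∃ c C : ℝ, 0 < c ∧ 0 < C ∧
      ∀ V : MvPolynomial (Fin d) ℝ, V ≠ 0 → V.totalDegree ≤ D →
        (∀ y : Fin d → ℝ, 0 ≤ MvPolynomial.eval y V) →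
        ∀ x : EuclideanSpace ℝ (Fin d),
          c * Mfun D V x ≤
            (sSup {r : ℝ | 0 < r ∧
              r ^ ((2:ℝ) - d) * ∫ y in ball x r, MvPolynomial.eval (fun i => y i) V ≤ 1})⁻¹ ∧
          (sSup {r : ℝ | 0 < r ∧
              r ^ ((2:ℝ) - d) * ∫ y in ball x r, MvPolynomial.eval (fun i => y i) V ≤ 1})⁻¹ ≤
            C * Mfun D V x := by
  classical
  obtain ⟨CL, hCL, hkeyLow⟩ := SZ.keyLow (d := d) D
  set K₁ : ℝ := (volume (ball (0 : EuclideanSpace ℝ (Fin d)) 1)).toReal with hK₁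
  have hK₁0 : 0 ≤ K₁ := ENNReal.toReal_nonneg
  set NR : ℝ := (((D + 1) ^ d : ℕ) : ℝ) with hNR
  have hNR1 : 1 ≤ NR := by
    rw [hNR]
    exact_mod_cast Nat.one_le_iff_ne_zero.mpr (pow_ne_zero _ (Nat.succ_ne_zero D))
  have hNR0 : 0 < NR := lt_of_lt_of_le one_pos hNR1
  set Emax : ℕ := d * D + 2 with hEmax
  set B : ℝ := ((D.factorial : ℝ)) ^ d with hB
  have hB1 : 1 ≤ B := one_le_pow₀ (by exact_mod_cast D.factorial_pos)
  have hB0 : 0 < B := lt_of_lt_of_le one_pos hB1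
  set δ : ℝ := (NR⁻¹) ^ Emax with hδ
  have hδ0 : 0 < δ := pow_pos (inv_pos.2 hNR0) _
  have hδ1 : δ ≤ 1 := pow_le_one₀ (inv_nonneg.2 hNR0.le) (inv_le_one_of_one_le₀ hNR1)
  set Λ : ℝ := δ⁻¹ * (CL + 1) + 1 with hΛ
  have hΛ1 : 1 ≤ Λ := le_add_of_nonneg_left (mul_nonneg (inv_nonneg.2 hδ0.le) (by linarith))
  have hΛ0 : 0 < Λ := lt_of_lt_of_le one_pos hΛ1
  set μ₀ : ℝ := min 1 (K₁ * NR + 1)⁻¹ with hμ₀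
  have hKN1 : (0:ℝ) < K₁ * NR + 1 := by nlinarith [mul_nonneg hK₁0 hNR0.le]
  have hμ₀0 : 0 < μ₀ := lt_min one_pos (inv_pos.2 hKN1)
  have hμ₀1 : μ₀ ≤ 1 := min_le_left _ _
  refine ⟨(B * Λ)⁻¹, μ₀⁻¹, inv_pos.2 (mul_pos hB0 hΛ0), inv_pos.2 hμ₀0, ?_⟩
  intro V hV0 hdeg hpos x
  set xf : Fin d → ℝ := fun i => x i with hxf
  set W : MvPolynomial (Fin d) ℝ := SZ.sh xf V with hW
  have hWne : W ≠ 0 := SZ.sh_ne_zero xf hV0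
  have hWsupp : ∀ u ∈ W.support, ∀ i : Fin d, u i ≤ D :=
    fun u hu i => SZ.support_sh_le hdeg hu i
  set cc : (Fin d → Fin (D + 1)) → ℝ := fun α => |MvPolynomial.coeff (SZ.emb D α) W|
    with hcc
  have hcc0 : ∀ α, 0 ≤ cc α := fun α => abs_nonneg _
  set nn : (Fin d → Fin (D + 1)) → ℕ := fun α => ∑ i, ((α i : ℕ)) with hnn
  have hnnEmax : ∀ α, nn α + 2 ≤ Emax := by
    intro α
    rw [hEmax]
    have h1 : nn α ≤ d * D := by
      simp only [hnn]
      calc ∑ i, ((α i : ℕ)) ≤ ∑ _i : Fin d, D :=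
            Finset.sum_le_sum fun i _ => Fin.is_le (α i)
        _ = d * D := by simp [Finset.sum_const, Fintype.card_fin, smul_eq_mul]
    omega
  set ff : (Fin d → Fin (D + 1)) → ℝ := fun α => ∏ i, (((α i : ℕ).factorial : ℝ)) with hff
  have hff1 : ∀ α, 1 ≤ ff α := by
    intro α
    have hfp : 1 ≤ ∏ i, ((α i : ℕ).factorial) :=
      Finset.one_le_prod' fun i _ => Nat.succ_le_of_lt (Nat.factorial_pos _)
    have hfp2 : (1:ℝ) ≤ ∏ i, (((α i : ℕ).factorial : ℝ)) := by exact_mod_cast hfp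
    simpa [hff] using hfp2
  have hffB : ∀ α, ff α ≤ B := by
    intro α
    simp only [hff, hB]
    calc (∏ i, (((α i : ℕ).factorial : ℝ)))
        ≤ ∏ _i : Fin d, (D.factorial : ℝ) := by
          refine Finset.prod_le_prod (fun i _ => by positivity) fun i _ => ?_
          exact_mod_cast Nat.factorial_le (Fin.is_le (α i))
      _ = ((D.factorial : ℝ)) ^ d := by
          rw [Finset.prod_const, Finset.card_univ, Fintype.card_fin]
  have hMfun : Mfun D V x = ∑ α, (ff α * cc α) ^ ((1 : ℝ) / ((nn α : ℝ) + 2)) := by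
    unfold Mfun
    refine Finset.sum_congr rfl fun α _ => ?_
    have h1 : MvPolynomial.eval (fun i => x i) (pd (fun i => (α i : ℕ)) V)
        = ff α * MvPolynomial.coeff (SZ.emb D α) W := by
      rw [show (fun i => x i) = xf from rfl, SZ.eval_pd]
      rfl
    have h2 : |MvPolynomial.eval (fun i => x i) (pd (fun i => (α i : ℕ)) V)|
        = ff α * cc α := by
      rw [h1, abs_mul, abs_of_nonneg (le_trans zero_le_one (hff1 α))]
    have h3 : (1:ℝ) / ((∑ i, ((α i : ℕ) : ℝ)) + 2) = (1:ℝ) / ((nn α : ℝ) + 2) := by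
      simp only [hnn]
      push_cast
      ring
    rw [h2, h3]
  set M0 : ℝ := ∑ α, (cc α) ^ ((1 : ℝ) / ((nn α : ℝ) + 2)) with hM0
  have hM0pos : 0 < M0 := by
    obtain ⟨u, hu⟩ : W.support.Nonempty := by
      rw [Finset.nonempty_iff_ne_empty]
      intro hc
      exact hWne (MvPolynomial.support_eq_empty.mp hc)
    set α : Fin d → Fin (D + 1) := fun i => ⟨u i, Nat.lt_succ_of_le (hWsupp u hu i)⟩
      with hα
    have hemb : SZ.emb D α = u := by
      ext i
      rfl
    have hccα : 0 < cc α := by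
      simp only [hcc, hemb]
      exact abs_pos.2 (MvPolynomial.mem_support_iff.mp hu)
    refine Finset.sum_pos' (fun β _ => Real.rpow_nonneg (hcc0 β) _)
      ⟨α, Finset.mem_univ α, Real.rpow_pos_of_pos hccα _⟩
  have hM0M : M0 ≤ Mfun D V x := by
    rw [hMfun]
    refine Finset.sum_le_sum fun α _ => ?_
    exact Real.rpow_le_rpow (hcc0 α)
      (le_mul_of_one_le_left (hcc0 α) (hff1 α)) (by positivity)
  have hMBM0 : Mfun D V x ≤ B * M0 := by
    rw [hMfun, hM0, Finset.mul_sum]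
    refine Finset.sum_le_sum fun α _ => ?_
    have hsplit : (ff α * cc α) ^ ((1 : ℝ) / ((nn α : ℝ) + 2))
        = (ff α) ^ ((1 : ℝ) / ((nn α : ℝ) + 2)) * (cc α) ^ ((1 : ℝ) / ((nn α : ℝ) + 2)) :=
      Real.mul_rpow (le_trans zero_le_one (hff1 α)) (hcc0 α)
    rw [hsplit]
    refine mul_le_mul ?_ le_rfl (Real.rpow_nonneg (hcc0 α) _) hB0.le
    calc (ff α) ^ ((1 : ℝ) / ((nn α : ℝ) + 2))
        ≤ (ff α) ^ (1 : ℝ) := by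
          refine Real.rpow_le_rpow_of_exponent_le (hff1 α) ?_
          rw [div_le_one (by positivity)]
          have h3 : (0:ℝ) ≤ (nn α : ℝ) := Nat.cast_nonneg _
          linarith
      _ = ff α := Real.rpow_one _
      _ ≤ B := hffB α
  set ar : ℝ → (Fin d → Fin (D + 1)) → ℝ :=
    fun r α => MvPolynomial.coeff (SZ.emb D α) W * r ^ (nn α) with har
  have hPid : ∀ (r : ℝ) (y : Fin d → ℝ),
      SZ.Pfun D (ar r) y = MvPolynomial.eval (fun i => xf i + r * y i) V := by
    intro r y
    have h1 : (fun i => xf i + r * y i) = fun i => (r * y i) + xf i := by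
      funext i
      ring
    rw [h1, ← SZ.eval_sh xf (fun i => r * y i) V, ← hW,
      SZ.eval_eq_sum_iota hWsupp]
    unfold SZ.Pfun
    refine Finset.sum_congr rfl fun α _ => ?_
    simp only [har]
    have h2 : ∏ i, (r * y i) ^ ((α i : ℕ))
        = r ^ (nn α) * ∏ i, (y i) ^ ((α i : ℕ)) := by
      simp only [hnn]
      rw [← Finset.prod_pow_eq_pow_sum, ← Finset.prod_mul_distrib]
      exact Finset.prod_congr rfl fun i _ => (mul_pow _ _ _)
    rw [h2]
    ring
  have hPnonneg : ∀ (r : ℝ) (y : Fin d → ℝ), 0 ≤ SZ.Pfun D (ar r) y := by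
    intro r y
    rw [hPid]
    exact hpos _
  set FF : ℝ → ℝ := fun r => ∑ α, cc α * r ^ (nn α + 2) with hFF
  have hsum_ar : ∀ r : ℝ, 0 < r → ∀ α, |ar r α| = cc α * r ^ (nn α) := by
    intro r hr α
    simp only [har, hcc]
    rw [abs_mul, abs_of_pos (pow_pos hr _)]
  have hFF_ar : ∀ r : ℝ, 0 < r → FF r = r ^ 2 * ∑ α, |ar r α| := by
    intro r hr
    simp only [hFF, Finset.mul_sum]
    refine Finset.sum_congr rfl fun α _ => ?_
    rw [hsum_ar r hr α, pow_add]
    ring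
  set S : Set ℝ := {r : ℝ | 0 < r ∧
    r ^ ((2:ℝ) - d) * ∫ y in ball x r, MvPolynomial.eval (fun i => y i) V ≤ 1} with hS
  have hIdent : ∀ r : ℝ, 0 < r →
      r ^ ((2:ℝ) - d) * ∫ y in ball x r, MvPolynomial.eval (fun i => y i) V
        = r ^ 2 * ∫ z in ball (0 : EuclideanSpace ℝ (Fin d)) 1,
            SZ.Pfun D (ar r) (fun i => z i) := by
    intro r hr
    have hintg : ∀ z : EuclideanSpace ℝ (Fin d),
        MvPolynomial.eval (fun i => (x + r • z) i) V = SZ.Pfun D (ar r) (fun i => z i) := by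
      intro z
      rw [hPid]
      congr 1
    rw [SZ.integral_ball_scale
      (fun y : EuclideanSpace ℝ (Fin d) => MvPolynomial.eval (fun i => y i) V) x hr]
    have hre : (∫ z in ball (0 : EuclideanSpace ℝ (Fin d)) 1,
        MvPolynomial.eval (fun i => (x + r • z) i) V)
        = ∫ z in ball (0 : EuclideanSpace ℝ (Fin d)) 1, SZ.Pfun D (ar r) (fun i => z i) :=
      setIntegral_congr_fun measurableSet_ball fun z _ => hintg z
    rw [hre, ← mul_assoc]
    congr 1
    rw [← Real.rpow_natCast r d, ← Real.rpow_add hr,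
      show ((2:ℝ) - d + d) = ((2:ℕ) : ℝ) by push_cast; ring, Real.rpow_natCast]
  have hup : ∀ r : ℝ, 0 < r →
      r ^ ((2:ℝ) - d) * (∫ y in ball x r, MvPolynomial.eval (fun i => y i) V)
        ≤ K₁ * FF r := by
    intro r hr
    rw [hIdent r hr, hFF_ar r hr]
    calc r ^ 2 * ∫ z in ball (0 : EuclideanSpace ℝ (Fin d)) 1,
          SZ.Pfun D (ar r) (fun i => z i)
        ≤ r ^ 2 * (K₁ * ∑ α, |ar r α|) :=
          mul_le_mul_of_nonneg_left (SZ.keyUp D (ar r)) (sq_nonneg r)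
      _ = K₁ * (r ^ 2 * ∑ α, |ar r α|) := by ring
  have hdn : ∀ r : ℝ, 0 < r →
      FF r ≤ CL * (r ^ ((2:ℝ) - d) * ∫ y in ball x r,
        MvPolynomial.eval (fun i => y i) V) := by
    intro r hr
    rw [hIdent r hr, hFF_ar r hr]
    calc r ^ 2 * ∑ α, |ar r α|
        ≤ r ^ 2 * (CL * ∫ z in ball (0 : EuclideanSpace ℝ (Fin d)) 1,
            SZ.Pfun D (ar r) (fun i => z i)) :=
          mul_le_mul_of_nonneg_left (hkeyLow (ar r) (hPnonneg r)) (sq_nonneg r)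
      _ = CL * (r ^ 2 * ∫ z in ball (0 : EuclideanSpace ℝ (Fin d)) 1,
            SZ.Pfun D (ar r) (fun i => z i)) := by ring
  have hFFmono : ∀ r r' : ℝ, 0 ≤ r → r ≤ r' → FF r ≤ FF r' := by
    intro r r' h0 h1
    exact Finset.sum_le_sum fun α _ =>
      mul_le_mul_of_nonneg_left (pow_le_pow_left₀ h0 h1 _) (hcc0 α)
  have hFFup : ∀ t r : ℝ, 1 ≤ t → 0 ≤ r → t ^ 2 * FF r ≤ FF (t * r) := by
    intro t r ht hr
    simp only [hFF, Finset.mul_sum]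
    refine Finset.sum_le_sum fun α _ => ?_
    rw [mul_pow]
    calc t ^ 2 * (cc α * r ^ (nn α + 2)) = cc α * (t ^ 2 * r ^ (nn α + 2)) := by ring
      _ ≤ cc α * (t ^ (nn α + 2) * r ^ (nn α + 2)) :=
          mul_le_mul_of_nonneg_left
            (mul_le_mul_of_nonneg_right
              (pow_le_pow_right₀ ht (by omega)) (pow_nonneg hr _)) (hcc0 α)
  have hFFdn : ∀ t r : ℝ, 0 ≤ t → t ≤ 1 → 0 ≤ r → FF (t * r) ≤ t ^ 2 * FF r := by
    intro t r ht0 ht1 hr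
    simp only [hFF, Finset.mul_sum]
    refine Finset.sum_le_sum fun α _ => ?_
    rw [mul_pow]
    calc cc α * (t ^ (nn α + 2) * r ^ (nn α + 2))
        ≤ cc α * (t ^ 2 * r ^ (nn α + 2)) :=
          mul_le_mul_of_nonneg_left
            (mul_le_mul_of_nonneg_right
              (pow_le_pow_of_le_one ht0 ht1 (by omega)) (pow_nonneg hr _)) (hcc0 α)
      _ = t ^ 2 * (cc α * r ^ (nn α + 2)) := by ring
  have hterm_pow : ∀ α : Fin d → Fin (D + 1),
      ((cc α) ^ ((1 : ℝ) / ((nn α : ℝ) + 2))) ^ (nn α + 2) = cc α := by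
    intro α
    rw [← Real.rpow_natCast ((cc α) ^ ((1 : ℝ) / ((nn α : ℝ) + 2))) (nn α + 2),
      ← Real.rpow_mul (hcc0 α)]
    rw [show (1 : ℝ) / ((nn α : ℝ) + 2) * ((nn α + 2 : ℕ) : ℝ) = 1 by
      push_cast
      field_simp]
    exact Real.rpow_one _
  have hcard : (Fintype.card (Fin d → Fin (D + 1)) : ℝ) = NR := by
    rw [Fintype.card_fun, Fintype.card_fin, Fintype.card_fin, hNR]
  have hFρ_le : FF M0⁻¹ ≤ NR := by
    simp only [hFF]
    have hterm : ∀ α : Fin d → Fin (D + 1), cc α * (M0⁻¹) ^ (nn α + 2) ≤ 1 := by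
      intro α
      have h1 : (cc α) ^ ((1 : ℝ) / ((nn α : ℝ) + 2)) ≤ M0 :=
        Finset.single_le_sum (f := fun β => (cc β) ^ ((1 : ℝ) / ((nn β : ℝ) + 2)))
          (fun β _ => Real.rpow_nonneg (hcc0 β) _) (Finset.mem_univ α)
      have h2 : (cc α) ^ ((1 : ℝ) / ((nn α : ℝ) + 2)) * M0⁻¹ ≤ 1 := by
        have h2a := mul_le_mul_of_nonneg_right h1 (inv_nonneg.2 hM0pos.le)
        rwa [mul_inv_cancel₀ hM0pos.ne'] at h2a
      calc cc α * (M0⁻¹) ^ (nn α + 2)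
          = ((cc α) ^ ((1 : ℝ) / ((nn α : ℝ) + 2)) * M0⁻¹) ^ (nn α + 2) := by
            rw [mul_pow, hterm_pow α]
        _ ≤ 1 := pow_le_one₀
            (mul_nonneg (Real.rpow_nonneg (hcc0 α) _) (inv_nonneg.2 hM0pos.le)) h2
    calc (∑ α, cc α * (M0⁻¹) ^ (nn α + 2)) ≤ ∑ _α : Fin d → Fin (D + 1), (1:ℝ) :=
          Finset.sum_le_sum fun α _ => hterm α
      _ = NR := by
          rw [Finset.sum_const, Finset.card_univ, nsmul_eq_mul, mul_one, hcard]
  have hFρ_ge : δ ≤ FF M0⁻¹ := by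
    obtain ⟨α₀, _, hmax⟩ := Finset.exists_max_image Finset.univ
      (fun β => (cc β) ^ ((1 : ℝ) / ((nn β : ℝ) + 2))) ⟨fun _ => 0, Finset.mem_univ _⟩
    have hsum_le : M0 ≤ NR * (cc α₀) ^ ((1 : ℝ) / ((nn α₀ : ℝ) + 2)) := by
      rw [hM0]
      calc (∑ α, (cc α) ^ ((1 : ℝ) / ((nn α : ℝ) + 2)))
          ≤ ∑ _α : Fin d → Fin (D + 1), (cc α₀) ^ ((1 : ℝ) / ((nn α₀ : ℝ) + 2)) :=
            Finset.sum_le_sum fun α _ => hmax α (Finset.mem_univ α)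
        _ = NR * (cc α₀) ^ ((1 : ℝ) / ((nn α₀ : ℝ) + 2)) := by
            rw [Finset.sum_const, Finset.card_univ, nsmul_eq_mul, hcard]
    have h3 : 1 ≤ NR * (cc α₀) ^ ((1 : ℝ) / ((nn α₀ : ℝ) + 2)) * M0⁻¹ := by
      have h4 := mul_le_mul_of_nonneg_right hsum_le (inv_nonneg.2 hM0pos.le)
      rwa [mul_inv_cancel₀ hM0pos.ne'] at h4
    have hkey : NR⁻¹ ≤ (cc α₀) ^ ((1 : ℝ) / ((nn α₀ : ℝ) + 2)) * M0⁻¹ := by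
      calc NR⁻¹ = NR⁻¹ * 1 := (mul_one _).symm
        _ ≤ NR⁻¹ * (NR * (cc α₀) ^ ((1 : ℝ) / ((nn α₀ : ℝ) + 2)) * M0⁻¹) :=
            mul_le_mul_of_nonneg_left h3 (inv_nonneg.2 hNR0.le)
        _ = (cc α₀) ^ ((1 : ℝ) / ((nn α₀ : ℝ) + 2)) * M0⁻¹ := by
            rw [← mul_assoc, ← mul_assoc, inv_mul_cancel₀ hNR0.ne', one_mul]
    have h5 : δ ≤ cc α₀ * (M0⁻¹) ^ (nn α₀ + 2) := by
      rw [show cc α₀ * (M0⁻¹) ^ (nn α₀ + 2)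
          = ((cc α₀) ^ ((1 : ℝ) / ((nn α₀ : ℝ) + 2)) * M0⁻¹) ^ (nn α₀ + 2) by
        rw [mul_pow, hterm_pow α₀]]
      calc δ = (NR⁻¹) ^ Emax := hδ
        _ ≤ (NR⁻¹) ^ (nn α₀ + 2) :=
            pow_le_pow_of_le_one (inv_nonneg.2 hNR0.le)
              (inv_le_one_of_one_le₀ hNR1) (hnnEmax α₀)
        _ ≤ ((cc α₀) ^ ((1 : ℝ) / ((nn α₀ : ℝ) + 2)) * M0⁻¹) ^ (nn α₀ + 2) :=
            pow_le_pow_left₀ (inv_nonneg.2 hNR0.le) hkey _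
    refine h5.trans ?_
    simp only [hFF]
    exact Finset.single_le_sum
      (f := fun α => cc α * (M0⁻¹) ^ (nn α + 2))
      (fun α _ => mul_nonneg (hcc0 α) (pow_nonneg (inv_nonneg.2 hM0pos.le) _))
      (Finset.mem_univ α₀)
  -- endgame
  have hS_ub : ∀ r ∈ S, r ≤ Λ * M0⁻¹ := by
    intro r hr
    obtain ⟨hr0, hr1⟩ := hr
    by_contra hc
    push_neg at hc
    have hFr : FF r ≤ CL := by
      refine (hdn r hr0).trans ?_
      calc CL * (r ^ ((2:ℝ) - d) * ∫ y in ball x r,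
            MvPolynomial.eval (fun i => y i) V) ≤ CL * 1 :=
            mul_le_mul_of_nonneg_left hr1 hCL.le
        _ = CL := mul_one _
    have hml : Λ ^ 2 * FF M0⁻¹ ≤ FF (Λ * M0⁻¹) := hFFup Λ M0⁻¹ hΛ1 (inv_nonneg.2 hM0pos.le)
    have hmono2 : FF (Λ * M0⁻¹) ≤ FF r := hFFmono _ _ (mul_pos hΛ0 (inv_pos.2 hM0pos)).le hc.le
    have hcontr : Λ ^ 2 * δ ≤ CL := by
      calc Λ ^ 2 * δ ≤ Λ ^ 2 * FF M0⁻¹ :=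
            mul_le_mul_of_nonneg_left hFρ_ge (sq_nonneg Λ)
        _ ≤ FF (Λ * M0⁻¹) := hml
        _ ≤ FF r := hmono2
        _ ≤ CL := hFr
    have h1 : Λ * δ = (CL + 1) + δ := by
      rw [hΛ, add_mul, one_mul, mul_comm (δ⁻¹) (CL + 1), mul_assoc,
        inv_mul_cancel₀ hδ0.ne', mul_one]
    have hgt : CL < Λ ^ 2 * δ := by
      calc CL < CL + 1 + δ := by linarith
        _ = Λ * δ := h1.symm
        _ ≤ Λ * (Λ * δ) := le_mul_of_one_le_left (mul_pos hΛ0 hδ0).le hΛ1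
        _ = Λ ^ 2 * δ := by ring
    exact absurd hcontr (not_le.mpr hgt)
  have hBdd : BddAbove S := ⟨Λ * M0⁻¹, fun r hr => hS_ub r hr⟩
  have hmemS : μ₀ * M0⁻¹ ∈ S := by
    have hr1 : (0:ℝ) < μ₀ * M0⁻¹ := mul_pos hμ₀0 (inv_pos.2 hM0pos)
    refine ⟨hr1, ?_⟩
    have hμle : μ₀ ≤ (K₁ * NR + 1)⁻¹ := min_le_right _ _
    have h2 : μ₀ * (K₁ * NR) ≤ (K₁ * NR + 1)⁻¹ * (K₁ * NR) :=
      mul_le_mul_of_nonneg_right hμle (mul_nonneg hK₁0 hNR0.le)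
    have h3 : (K₁ * NR + 1)⁻¹ * (K₁ * NR) ≤ 1 := by
      have h4 := (div_le_one hKN1).mpr
        (by linarith : K₁ * NR ≤ K₁ * NR + 1)
      rwa [div_eq_inv_mul] at h4
    calc (μ₀ * M0⁻¹) ^ ((2:ℝ) - d) * ∫ y in ball x (μ₀ * M0⁻¹),
          MvPolynomial.eval (fun i => y i) V
        ≤ K₁ * FF (μ₀ * M0⁻¹) := hup _ hr1
      _ ≤ K₁ * (μ₀ ^ 2 * FF M0⁻¹) :=
          mul_le_mul_of_nonneg_left
            (hFFdn μ₀ M0⁻¹ hμ₀0.le hμ₀1 (inv_nonneg.2 hM0pos.le)) hK₁0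
      _ ≤ K₁ * (μ₀ ^ 2 * NR) :=
          mul_le_mul_of_nonneg_left
            (mul_le_mul_of_nonneg_left hFρ_le (sq_nonneg _)) hK₁0
      _ = μ₀ * (μ₀ * (K₁ * NR)) := by ring
      _ ≤ 1 * 1 := mul_le_mul hμ₀1 (h2.trans h3) (mul_nonneg hμ₀0.le (mul_nonneg hK₁0 hNR0.le)) zero_le_one
      _ = 1 := mul_one 1
  have hSne : S.Nonempty := ⟨_, hmemS⟩
  have hsup_lb : μ₀ * M0⁻¹ ≤ sSup S := le_csSup hBdd hmemS
  have hsup_ub : sSup S ≤ Λ * M0⁻¹ := csSup_le hSne hS_ub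
  have hsup_pos : 0 < sSup S := lt_of_lt_of_le (mul_pos hμ₀0 (inv_pos.2 hM0pos)) hsup_lb
  constructor
  · have h1 : (Λ * M0⁻¹)⁻¹ ≤ (sSup S)⁻¹ := inv_anti₀ hsup_pos hsup_ub
    refine le_trans ?_ h1
    rw [mul_inv Λ M0⁻¹, inv_inv]
    calc (B * Λ)⁻¹ * Mfun D V x ≤ (B * Λ)⁻¹ * (B * M0) :=
          mul_le_mul_of_nonneg_left hMBM0 (inv_nonneg.2 (mul_pos hB0 hΛ0).le)
      _ = Λ⁻¹ * M0 := by
          rw [mul_inv, show B⁻¹ * Λ⁻¹ * (B * M0) = (B⁻¹ * B) * (Λ⁻¹ * M0) by ring,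
            inv_mul_cancel₀ hB0.ne', one_mul]
  · have h2 : (sSup S)⁻¹ ≤ (μ₀ * M0⁻¹)⁻¹ :=
      inv_anti₀ (mul_pos hμ₀0 (inv_pos.2 hM0pos)) hsup_lb
    refine h2.trans ?_
    rw [mul_inv μ₀ M0⁻¹, inv_inv]
    exact mul_le_mul_of_nonneg_left hM0M (inv_nonneg.2 hμ₀0.le)
end

section
/- Taylor growth estimate for polynomials: if V is a polynomial on ℝ^d of total degree ≤ D and M(x,V) = Σ_α |∂^α V(x)|^{1/(|α|+2)}, then there is a constant C = C(d,D) with |∂^α V(y)| ≤ C M(x,V)^{|α|+2} (1 + |x − y| M(x,V))^D for all multi-indices α and all x, y ∈ ℝ^d; consequently M(y,V) ≤ C' M(x,V)(1 + |x−y| M(x,V))^{D/2}. -/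
open MeasureTheory Metric Filter
open scoped ENNReal

section SZaux
open MvPolynomial
variable {d : ℕ}

lemma pow_pderiv_monomial (i : Fin d) (k : ℕ) (n : Fin d →₀ ℕ) (c : ℝ) :
    ((MvPolynomial.pderiv i).toLinearMap ^ k :
      Module.End ℝ (MvPolynomial (Fin d) ℝ)) (monomial n c)
      = monomial (n - Finsupp.single i k) (c * (n i).descFactorial k) := by
  induction k generalizing n c with
  | zero => simp
  | succ k ih =>
    rw [pow_succ, Module.End.mul_apply]
    have h1 : ((MvPolynomial.pderiv i).toLinearMap :
        Module.End ℝ (MvPolynomial (Fin d) ℝ)) (monomial n c)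
        = monomial (n - Finsupp.single i 1) (c * (n i)) := by
      simp [MvPolynomial.pderiv_monomial]
    rw [h1, ih]
    congr 1
    · rw [tsub_tsub, ← Finsupp.single_add, add_comm 1 k]
    · have h2 : ((n - Finsupp.single i 1 : Fin d →₀ ℕ)) i = n i - 1 := by
        rw [Finsupp.tsub_apply, Finsupp.single_eq_same]
      rw [h2]
      have : (n i) * Nat.descFactorial (n i - 1) k = Nat.descFactorial (n i) (k+1) := by
        cases h : n i with
        | zero => simp
        | succ m => rw [Nat.succ_descFactorial_succ]; simp
      push_cast [← this]
      ring

lemma list_single_apply_zero (γ : Fin d → ℕ) (j : Fin d) (L : List (Fin d)) (hj : j ∉ L) :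
    ((L.map fun i => Finsupp.single i (γ i)).sum) j = 0 := by
  induction L with
  | nil => simp
  | cons a t ih =>
    simp only [List.mem_cons, not_or] at hj
    simp only [List.map_cons, List.sum_cons, Finsupp.add_apply]
    rw [Finsupp.single_eq_of_ne' (Ne.symm hj.1), ih hj.2]

lemma pd_list_monomial (γ : Fin d → ℕ) (n : Fin d →₀ ℕ) (c : ℝ) (L : List (Fin d))
    (hL : L.Nodup) :
    ((L.map (fun i => ((MvPolynomial.pderiv i).toLinearMap ^ (γ i) :
        Module.End ℝ (MvPolynomial (Fin d) ℝ)))).prod) (monomial n c)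
    = monomial (n - (L.map fun i => Finsupp.single i (γ i)).sum)
        (c * (L.map fun i => ((n i).descFactorial (γ i) : ℝ)).prod) := by
  induction L generalizing c with
  | nil => simp
  | cons a t ih =>
    obtain ⟨ha, ht⟩ := List.nodup_cons.mp hL
    simp only [List.map_cons, List.prod_cons, List.sum_cons, Module.End.mul_apply]
    rw [ih c ht, pow_pderiv_monomial]
    have h0 : ((n - (t.map fun i => Finsupp.single i (γ i)).sum : Fin d →₀ ℕ)) a = n a := by
      rw [Finsupp.tsub_apply, list_single_apply_zero γ a t ha, Nat.sub_zero]
    congr 1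
    · rw [tsub_tsub, add_comm]
    · rw [h0]; push_cast; ring

lemma pd_monomial (γ : Fin d → ℕ) (n : Fin d →₀ ℕ) (c : ℝ) :
    pd γ (monomial n c) = monomial (n - Finsupp.equivFunOnFinite.symm γ)
      (c * ∏ i, ((n i).descFactorial (γ i) : ℝ)) := by
  rw [pd, pd_list_monomial γ n c _ (List.nodup_finRange d)]
  have h1 : (((List.finRange d).map fun i => Finsupp.single i (γ i)).sum)
      = Finsupp.equivFunOnFinite.symm γ := by
    rw [← Fin.sum_univ_def]
    rw [← Finsupp.univ_sum_single (Finsupp.equivFunOnFinite.symm γ)]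
    simp
  rw [h1, ← Fin.prod_univ_def]

lemma pd_sum {σ : Type*} (γ : Fin d → ℕ) (S : Finset σ) (f : σ → MvPolynomial (Fin d) ℝ) :
    pd γ (∑ s ∈ S, f s) = ∑ s ∈ S, pd γ (f s) := by
  unfold pd; exact map_sum _ f S

lemma sum_fin_le_of_mem_support {D : ℕ} {V : MvPolynomial (Fin d) ℝ} (hV : V.totalDegree ≤ D)
    {n : Fin d →₀ ℕ} (hn : n ∈ V.support) : ∑ i, n i ≤ D := by
  have h1 := MvPolynomial.le_totalDegree hn
  have h2 : (n.sum fun _ e => e) = ∑ i, n i :=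
    Finsupp.sum_fintype _ _ (fun i => rfl)
  omega

lemma pd_eq_zero {D : ℕ} (V : MvPolynomial (Fin d) ℝ) (hV : V.totalDegree ≤ D)
    (γ : Fin d → ℕ) (hγ : D < ∑ i, γ i) : pd γ V = 0 := by
  conv_lhs => rw [← V.support_sum_monomial_coeff]
  rw [pd_sum]
  refine Finset.sum_eq_zero fun n hn => ?_
  rw [pd_monomial]
  have hns : ∑ i, n i ≤ D := sum_fin_le_of_mem_support hV hn
  obtain ⟨i, hi⟩ : ∃ i, n i < γ i := by
    by_contra h
    push_neg at h
    have := Finset.sum_le_sum (fun i (_ : i ∈ Finset.univ) => h i)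
    omega
  have hz : ((n i).descFactorial (γ i) : ℝ) = 0 := by
    rw [Nat.descFactorial_eq_zero_iff_lt.2 hi]; simp
  rw [Finset.prod_eq_zero (Finset.mem_univ i) hz, mul_zero, map_zero]

lemma descFactorial_add_of_le (m a b : ℕ) (h : a ≤ m) :
    m.descFactorial (a + b) = m.descFactorial a * (m - a).descFactorial b := by
  induction b with
  | zero => simp
  | succ b ih =>
    rw [show a + (b+1) = (a+b)+1 from rfl, Nat.descFactorial_succ, ih,
      Nat.descFactorial_succ, ← Nat.sub_sub]
    ring

lemma coord_sum (Dn m a : ℕ) (hm : m ≤ Dn) (u v : ℝ) :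
    ∑ b ∈ Finset.range (Dn+1),
      ((m.descFactorial (a+b) : ℝ) * u^(m - a - b) * (v-u)^b / (Nat.factorial b))
    = (m.descFactorial a : ℝ) * v^(m-a) := by
  by_cases h : a ≤ m
  · have hsub : Finset.range ((m-a)+1) ⊆ Finset.range (Dn+1) := by
      apply Finset.range_subset_range.2; omega
    rw [← Finset.sum_subset hsub ?_]
    · have key : ∀ b ∈ Finset.range ((m-a)+1),
          (m.descFactorial (a+b) : ℝ) * u^(m-a-b) * (v-u)^b / (Nat.factorial b)
          = (m.descFactorial a : ℝ) * ((v-u)^b * u^((m-a)-b) * ((m-a).choose b)) := by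
        intro b hb
        rw [descFactorial_add_of_le m a b h, Nat.descFactorial_eq_factorial_mul_choose (m-a) b]
        have hbf : ((Nat.factorial b : ℝ)) ≠ 0 := by positivity
        push_cast
        field_simp
      rw [Finset.sum_congr rfl key, ← Finset.mul_sum, ← add_pow, sub_add_cancel]
    · intro b hb hnb
      simp only [Finset.mem_range] at hb hnb
      have : m.descFactorial (a+b) = 0 :=
        Nat.descFactorial_eq_zero_iff_lt.2 (by omega)
      rw [this]; simp
  · push_neg at h
    have h1 : m.descFactorial a = 0 := Nat.descFactorial_eq_zero_iff_lt.2 h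
    rw [h1]
    simp only [Nat.cast_zero, zero_mul]
    refine Finset.sum_eq_zero fun b hb => ?_
    have : m.descFactorial (a+b) = 0 :=
      Nat.descFactorial_eq_zero_iff_lt.2 (by omega)
    rw [this]; simp

lemma taylor_pd {D : ℕ} (V : MvPolynomial (Fin d) ℝ) (hV : V.totalDegree ≤ D)
    (α : Fin d → ℕ) (x y : Fin d → ℝ) :
    MvPolynomial.eval y (pd α V) =
      ∑ β : Fin d → Fin (D+1),
        MvPolynomial.eval x (pd (fun i => α i + (β i : ℕ)) V) *
          ∏ i, ((y i - x i) ^ ((β i : ℕ)) / ((Nat.factorial (β i)) : ℝ)) := by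
  have mono : ∀ n ∈ V.support,
      MvPolynomial.eval y (pd α (monomial n (V.coeff n))) =
      ∑ β : Fin d → Fin (D+1),
        MvPolynomial.eval x (pd (fun i => α i + (β i : ℕ)) (monomial n (V.coeff n))) *
          ∏ i, ((y i - x i) ^ ((β i : ℕ)) / ((Nat.factorial (β i)) : ℝ)) := by
    intro n hn
    have hni : ∀ i, n i ≤ D := by
      intro i
      have h1 : ∑ j, n j ≤ D := sum_fin_le_of_mem_support hV hn
      have h2 : n i ≤ ∑ j, n j :=
        Finset.single_le_sum (fun j _ => Nat.zero_le _) (Finset.mem_univ i)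
      omega
    set c := V.coeff n with hc
    simp only [pd_monomial, MvPolynomial.eval_monomial, Finsupp.prod_pow,
      Finsupp.tsub_apply, Finsupp.equivFunOnFinite_symm_apply_apply]
    have key : ∀ i : Fin d,
        ∑ b : Fin (D+1), (((n i).descFactorial (α i + (b : ℕ)) : ℝ) *
          x i ^ (n i - α i - (b : ℕ)) * (y i - x i) ^ ((b : ℕ)) / ((Nat.factorial (b : ℕ)) : ℝ))
        = ((n i).descFactorial (α i) : ℝ) * (y i) ^ (n i - α i) := by
      intro i
      rw [Fin.sum_univ_eq_sum_range (fun b => ((n i).descFactorial (α i + b) : ℝ) *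
        x i ^ (n i - α i - b) * (y i - x i) ^ b / ((Nat.factorial b) : ℝ))]
      exact coord_sum D (n i) (α i) (hni i) (x i) (y i)
    calc c * (∏ i, (((n i).descFactorial (α i) : ℝ))) * ∏ i, y i ^ (n i - α i)
        = c * ∏ i, (((n i).descFactorial (α i) : ℝ) * y i ^ (n i - α i)) := by
          rw [Finset.prod_mul_distrib]; ring
      _ = c * ∏ i, ∑ b : Fin (D+1), (((n i).descFactorial (α i + (b : ℕ)) : ℝ) *
            x i ^ (n i - α i - (b : ℕ)) * (y i - x i) ^ ((b : ℕ)) /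
              ((Nat.factorial (b : ℕ)) : ℝ)) := by
          simp_rw [key]
      _ = c * ∑ β ∈ Fintype.piFinset (fun _ : Fin d => (Finset.univ : Finset (Fin (D+1)))),
            ∏ i, (((n i).descFactorial (α i + (β i : ℕ)) : ℝ) *
            x i ^ (n i - α i - (β i : ℕ)) * (y i - x i) ^ ((β i : ℕ)) /
              ((Nat.factorial (β i : ℕ)) : ℝ)) := by
          rw [Finset.prod_univ_sum]
      _ = ∑ β : Fin d → Fin (D+1),
            ((c * ∏ i, (((n i).descFactorial (α i + (β i : ℕ)) : ℝ))) *
              ∏ i, x i ^ (n i - (α i + (β i : ℕ)))) *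
              ∏ i, ((y i - x i) ^ ((β i : ℕ)) / ((Nat.factorial (β i)) : ℝ)) := by
          rw [Fintype.piFinset_univ, Finset.mul_sum]
          refine Finset.sum_congr rfl fun β _ => ?_
          rw [Finset.prod_div_distrib, Finset.prod_mul_distrib, Finset.prod_mul_distrib,
            Finset.prod_div_distrib]
          simp_rw [Nat.sub_sub]
          ring
  calc MvPolynomial.eval y (pd α V)
      = ∑ n ∈ V.support, MvPolynomial.eval y (pd α (monomial n (V.coeff n))) := by
        conv_lhs => rw [← V.support_sum_monomial_coeff, pd_sum, map_sum]
    _ = ∑ n ∈ V.support, ∑ β : Fin d → Fin (D+1),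
          MvPolynomial.eval x (pd (fun i => α i + (β i : ℕ)) (monomial n (V.coeff n))) *
            ∏ i, ((y i - x i) ^ ((β i : ℕ)) / ((Nat.factorial (β i)) : ℝ)) :=
        Finset.sum_congr rfl mono
    _ = ∑ β : Fin d → Fin (D+1), ∑ n ∈ V.support,
          MvPolynomial.eval x (pd (fun i => α i + (β i : ℕ)) (monomial n (V.coeff n))) *
            ∏ i, ((y i - x i) ^ ((β i : ℕ)) / ((Nat.factorial (β i)) : ℝ)) :=
        Finset.sum_comm
    _ = _ := by
        refine Finset.sum_congr rfl fun β _ => ?_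
        rw [← Finset.sum_mul, ← map_sum, ← pd_sum, V.support_sum_monomial_coeff]

lemma Mfun_nonneg {D : ℕ} (V : MvPolynomial (Fin d) ℝ) (x : EuclideanSpace ℝ (Fin d)) :
    0 ≤ Mfun D V x :=
  Finset.sum_nonneg fun β _ => Real.rpow_nonneg (abs_nonneg _) _

lemma abs_eval_le {D : ℕ} (V : MvPolynomial (Fin d) ℝ) (hV : V.totalDegree ≤ D)
    (x : EuclideanSpace ℝ (Fin d)) (γ : Fin d → ℕ) :
    |MvPolynomial.eval (fun i => x i) (pd γ V)| ≤ (Mfun D V x) ^ ((∑ i, γ i) + 2) := by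
  by_cases hγ : ∑ i, γ i ≤ D
  · set M := Mfun D V x with hMdef
    set t := |MvPolynomial.eval (fun i => x i) (pd γ V)| with htdef
    have ht : 0 ≤ t := abs_nonneg _
    set k := ∑ i, γ i with hkdef
    have hik : ∀ i, γ i < D + 1 := by
      intro i
      have : γ i ≤ ∑ j, γ j :=
        Finset.single_le_sum (fun j _ => Nat.zero_le _) (Finset.mem_univ i)
      omega
    set γ' : Fin d → Fin (D+1) := fun i => ⟨γ i, hik i⟩ with hγ'def
    have e2 : ∑ i, ((γ' i : ℕ) : ℝ) = (k : ℝ) := by rw [hkdef, Nat.cast_sum]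
    have hterm : t ^ ((1:ℝ)/((k:ℝ)+2)) ≤ M := by
      have h := Finset.single_le_sum (f := fun β : Fin d → Fin (D+1) =>
        |MvPolynomial.eval (fun i => x i) (pd (fun i => (β i : ℕ)) V)| ^
          ((1:ℝ) / ((∑ i, ((β i : ℕ) : ℝ)) + 2)))
        (fun β _ => Real.rpow_nonneg (abs_nonneg _) _) (Finset.mem_univ γ')
      rw [show ((1:ℝ)/((k:ℝ)+2)) = (1:ℝ)/((∑ i, ((γ' i : ℕ) : ℝ)) + 2) by rw [e2]]
      exact h
    calc t = (t ^ ((1:ℝ)/((k:ℝ)+2))) ^ (k+2) := by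
          rw [← Real.rpow_natCast (t ^ ((1:ℝ)/((k:ℝ)+2))) (k+2), ← Real.rpow_mul ht]
          push_cast
          rw [one_div, inv_mul_cancel₀ (by positivity), Real.rpow_one]
      _ ≤ M ^ (k+2) := pow_le_pow_left₀ (Real.rpow_nonneg ht _) hterm _
  · rw [pd_eq_zero V hV γ (by omega)]
    simpa using pow_nonneg (Mfun_nonneg V x) _

lemma coord_dist (x y : EuclideanSpace ℝ (Fin d)) (i : Fin d) :
    |y i - x i| ≤ dist x y := by
  have h := Finset.single_le_sum (f := fun j => dist (x j) (y j) ^ 2)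
    (fun j _ => sq_nonneg _) (Finset.mem_univ i)
  have h2 := Real.sqrt_le_sqrt h
  rw [Real.sqrt_sq dist_nonneg] at h2
  rw [EuclideanSpace.dist_eq]
  calc |y i - x i| = dist (x i) (y i) := by rw [Real.dist_eq, abs_sub_comm]
    _ ≤ _ := h2

lemma part1 {D : ℕ} (V : MvPolynomial (Fin d) ℝ) (hV : V.totalDegree ≤ D)
    (α : Fin d → ℕ) (x y : EuclideanSpace ℝ (Fin d)) :
    |MvPolynomial.eval (fun i => y i) (pd α V)| ≤
      ((D+1:ℝ))^d * (Mfun D V x) ^ ((∑ i, α i) + 2) * (1 + dist x y * Mfun D V x) ^ D := by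
  set M := Mfun D V x with hMdef
  have hM : 0 ≤ M := Mfun_nonneg V x
  set Δ := dist x y with hΔdef
  have hΔ : 0 ≤ Δ := dist_nonneg
  set P := 1 + Δ * M with hPdef
  have hP : 1 ≤ P := le_add_of_nonneg_right (mul_nonneg hΔ hM)
  have hP0 : 0 ≤ P := le_trans zero_le_one hP
  rw [taylor_pd V hV α (fun i => x i) (fun i => y i)]
  have bound : ∀ β : Fin d → Fin (D+1),
      |MvPolynomial.eval (fun i => x i) (pd (fun i => α i + (β i : ℕ)) V) *
        ∏ i, ((y i - x i) ^ ((β i : ℕ)) / ((Nat.factorial (β i)) : ℝ))|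
      ≤ M ^ ((∑ i, α i) + 2) * P ^ D := by
    intro β
    by_cases hβ : (∑ i, α i) + (∑ i, (β i : ℕ)) ≤ D
    · rw [abs_mul]
      have h1 : |MvPolynomial.eval (fun i => x i) (pd (fun i => α i + (β i : ℕ)) V)| ≤
          M ^ ((∑ i, α i) + (∑ i, (β i : ℕ)) + 2) := by
        have := abs_eval_le V hV x (fun i => α i + (β i : ℕ))
        rwa [Finset.sum_add_distrib] at this
      have h2 : |∏ i, ((y i - x i) ^ ((β i : ℕ)) / ((Nat.factorial (β i)) : ℝ))| ≤
          Δ ^ (∑ i, (β i : ℕ)) := by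
        rw [Finset.abs_prod, ← Finset.prod_pow_eq_pow_sum]
        refine Finset.prod_le_prod (fun i _ => abs_nonneg _) fun i _ => ?_
        rw [abs_div, abs_pow, Nat.abs_cast]
        calc |y i - x i| ^ ((β i : ℕ)) / ((Nat.factorial (β i)) : ℝ)
            ≤ |y i - x i| ^ ((β i : ℕ)) := by
              apply div_le_self (pow_nonneg (abs_nonneg _) _)
              exact Nat.one_le_cast.2 (Nat.one_le_iff_ne_zero.2 (Nat.factorial_ne_zero ((β i : ℕ))))
          _ ≤ Δ ^ ((β i : ℕ)) := pow_le_pow_left₀ (abs_nonneg _) (coord_dist x y i) _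
      calc |MvPolynomial.eval (fun i => x i) (pd (fun i => α i + (β i : ℕ)) V)| *
            |∏ i, ((y i - x i) ^ ((β i : ℕ)) / ((Nat.factorial (β i)) : ℝ))|
          ≤ M ^ ((∑ i, α i) + (∑ i, (β i : ℕ)) + 2) * Δ ^ (∑ i, (β i : ℕ)) := by
            apply mul_le_mul h1 h2 (abs_nonneg _) (pow_nonneg hM _)
        _ = M ^ ((∑ i, α i) + 2) * (M * Δ) ^ (∑ i, (β i : ℕ)) := by
            rw [mul_pow, ← mul_assoc, ← pow_add]; ring_nf
        _ ≤ M ^ ((∑ i, α i) + 2) * P ^ (∑ i, (β i : ℕ)) := by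
            apply mul_le_mul_of_nonneg_left _ (pow_nonneg hM _)
            apply pow_le_pow_left₀ (mul_nonneg hM hΔ)
            rw [hPdef, mul_comm]
            exact le_add_of_nonneg_left zero_le_one
        _ ≤ M ^ ((∑ i, α i) + 2) * P ^ D := by
            apply mul_le_mul_of_nonneg_left _ (pow_nonneg hM _)
            exact pow_le_pow_right₀ hP (by omega)
    · rw [pd_eq_zero V hV (fun i => α i + (β i : ℕ)) (by rw [Finset.sum_add_distrib]; omega)]
      simp only [map_zero, zero_mul, abs_zero]
      positivity
  calc |∑ β : Fin d → Fin (D+1),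
        MvPolynomial.eval (fun i => x i) (pd (fun i => α i + (β i : ℕ)) V) *
          ∏ i, ((y i - x i) ^ ((β i : ℕ)) / ((Nat.factorial (β i)) : ℝ))|
      ≤ ∑ β : Fin d → Fin (D+1), |MvPolynomial.eval (fun i => x i)
          (pd (fun i => α i + (β i : ℕ)) V) *
          ∏ i, ((y i - x i) ^ ((β i : ℕ)) / ((Nat.factorial (β i)) : ℝ))| :=
        Finset.abs_sum_le_sum_abs _ _
    _ ≤ ∑ _β : Fin d → Fin (D+1), M ^ ((∑ i, α i) + 2) * P ^ D :=
        Finset.sum_le_sum fun β _ => bound β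
    _ = ((D+1:ℝ))^d * M ^ ((∑ i, α i) + 2) * P ^ D := by
        rw [Finset.sum_const, Finset.card_univ]
        simp [Fintype.card_fun]
        push_cast
        ring

lemma part2 {D : ℕ} (V : MvPolynomial (Fin d) ℝ) (hV : V.totalDegree ≤ D)
    (x y : EuclideanSpace ℝ (Fin d)) :
    Mfun D V y ≤ (((D+1:ℝ))^d * ((D+1:ℝ))^d) * Mfun D V x *
      (1 + dist x y * Mfun D V x) ^ ((D:ℝ)/2) := by
  set C : ℝ := ((D+1:ℝ))^d with hCdef
  have hC0 : (0:ℝ) < C := by positivity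
  have hC1 : (1:ℝ) ≤ C := one_le_pow₀ (by norm_num)
  set M := Mfun D V x with hMdef
  have hM : 0 ≤ M := Mfun_nonneg V x
  set Δ := dist x y with hΔdef
  have hΔ : 0 ≤ Δ := dist_nonneg
  set P := 1 + Δ * M with hPdef
  have hP : 1 ≤ P := le_add_of_nonneg_right (mul_nonneg hΔ hM)
  have hP0 : 0 ≤ P := le_trans zero_le_one hP
  have hterm : ∀ α : Fin d → Fin (D+1),
      |MvPolynomial.eval (fun i => y i) (pd (fun i => (α i : ℕ)) V)| ^
        ((1:ℝ) / ((∑ i, ((α i : ℕ) : ℝ)) + 2)) ≤ C * (M * P ^ ((D:ℝ)/2)) := by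
    intro α
    set k := ∑ i, (α i : ℕ) with hkdef
    have ek : ∑ i, ((α i : ℕ) : ℝ) = (k : ℝ) := by rw [hkdef, Nat.cast_sum]
    rw [ek]
    set e : ℝ := (1:ℝ) / ((k:ℝ)+2) with hedef
    have he0 : 0 ≤ e := by positivity
    have he1 : e ≤ 1 := by
      rw [hedef]
      rw [div_le_one (by positivity)]
      have : (0:ℝ) ≤ (k:ℝ) := Nat.cast_nonneg k
      linarith
    have hs := part1 V hV (fun i => (α i : ℕ)) x y
    rw [← hkdef, ← hMdef, ← hΔdef, ← hPdef, ← hCdef] at hs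
    have h1 : |MvPolynomial.eval (fun i => y i) (pd (fun i => (α i : ℕ)) V)| ^ e ≤
        (C * M ^ (k+2) * P ^ D) ^ e :=
      Real.rpow_le_rpow (abs_nonneg _) hs he0
    have h2 : (C * M ^ (k+2) * P ^ D) ^ e
        = C ^ e * (M ^ (k+2)) ^ e * (P ^ D) ^ e := by
      rw [Real.mul_rpow (by positivity) (by positivity),
        Real.mul_rpow (le_of_lt hC0) (by positivity)]
    have h3 : C ^ e ≤ C := by
      calc C ^ e ≤ C ^ (1:ℝ) := Real.rpow_le_rpow_of_exponent_le hC1 he1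
        _ = C := Real.rpow_one C
    have h4 : (M ^ (k+2)) ^ e = M := by
      rw [← Real.rpow_natCast M (k+2), ← Real.rpow_mul hM, hedef]
      push_cast
      rw [mul_one_div, div_self (by positivity), Real.rpow_one]
    have h5 : (P ^ D) ^ e ≤ P ^ ((D:ℝ)/2) := by
      rw [← Real.rpow_natCast P D, ← Real.rpow_mul hP0]
      apply Real.rpow_le_rpow_of_exponent_le hP
      rw [hedef, mul_one_div]
      apply div_le_div_of_nonneg_left (Nat.cast_nonneg D) (by norm_num)
      have : (0:ℝ) ≤ (k:ℝ) := Nat.cast_nonneg k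
      linarith
    calc |MvPolynomial.eval (fun i => y i) (pd (fun i => (α i : ℕ)) V)| ^ e
        ≤ C ^ e * (M ^ (k+2)) ^ e * (P ^ D) ^ e := by rw [← h2]; exact h1
      _ ≤ C * (M * P ^ ((D:ℝ)/2)) := by
          rw [h4]
          calc C ^ e * M * (P ^ D) ^ e ≤ C * M * P ^ ((D:ℝ)/2) := by
                apply mul_le_mul
                · exact mul_le_mul_of_nonneg_right h3 hM
                · exact h5
                · positivity
                · positivity
            _ = C * (M * P ^ ((D:ℝ)/2)) := by ring
  calc Mfun D V y ≤ ∑ _α : Fin d → Fin (D+1), C * (M * P ^ ((D:ℝ)/2)) :=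
        Finset.sum_le_sum fun α _ => hterm α
    _ = (C * C) * M * P ^ ((D:ℝ)/2) := by
        rw [Finset.sum_const, Finset.card_univ]
        simp [Fintype.card_fun, hCdef]
        push_cast
        ring

end SZaux

/-- Taylor growth estimate for polynomials: for `V` of degree at most `D` there is
`C = C(d,D)` with `|∂^α V(y)| ≤ C M(x,V)^{|α|+2} (1 + |x−y| M(x,V))^D` for all `α, x, y`;
consequently `M(y,V) ≤ C' M(x,V)(1 + |x−y| M(x,V))^{D/2}`. -/
theorem polynomial_taylor_growth_estimate
    (d D : ℕ) (hd : 1 ≤ d) :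
    ∃ C C' : ℝ, 0 < C ∧ 0 < C' ∧
      ∀ V : MvPolynomial (Fin d) ℝ, V.totalDegree ≤ D →
        (∀ (α : Fin d → ℕ) (x y : EuclideanSpace ℝ (Fin d)),
          |MvPolynomial.eval (fun i => y i) (pd α V)| ≤
            C * (Mfun D V x) ^ ((∑ i, α i) + 2) *
              (1 + dist x y * Mfun D V x) ^ D) ∧
        ∀ x y : EuclideanSpace ℝ (Fin d),
          Mfun D V y ≤ C' * Mfun D V x * (1 + dist x y * Mfun D V x) ^ ((D:ℝ)/2) :=
  ⟨((D+1:ℝ))^d, ((D+1:ℝ))^d * ((D+1:ℝ))^d, by positivity, by positivity,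
    fun V hV => ⟨fun α x y => part1 V hV α x y, fun x y => part2 V hV x y⟩⟩
end
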